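/- arXiv:2102.10379 — 4 statements merged into one kernel-verified Lean document; each statement's English description precedes it below -/
import Mathlib

section
/- For every β > 0 and every u ∈ H^{1/2}(ℝ), the integral ∫_ℝ (e^{β u(x)²} − 1) dx is finite. -/
open MeasureTheory Real Filter

noncomputable section

/-- Squared Gagliardo seminorm `[u]²` for `s = 1/2`, `p = 2`, `N = 1`. -/
def gagliardoSq (u : ℝ → ℝ) : ℝ :=
  ∫ p : ℝ × ℝ, (u p.1 - u p.2) ^ 2 / |p.1 - p.2| ^ 2

/-- Membership in `H^{1/2}(ℝ)`. -/
def memH12 (u : ℝ → ℝ) : Prop :=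
  Integrable (fun x : ℝ => (u x) ^ 2) ∧
  Integrable (fun p : ℝ × ℝ => (u p.1 - u p.2) ^ 2 / |p.1 - p.2| ^ 2)

/-- Squared norm `‖u‖² = ‖u‖_{L²}² + [u]²` on `H^{1/2}(ℝ)`. -/
def sobNormSq (u : ℝ → ℝ) : ℝ :=
  (∫ x : ℝ, (u x) ^ 2) + gagliardoSq u

/-- Squared weighted norm `‖u‖_*² = ∫ ln(1+|x|) u(x)² dx`. -/
def starNormSq (u : ℝ → ℝ) : ℝ :=
  ∫ x : ℝ, Real.log (1 + |x|) * (u x) ^ 2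

/-- Membership in the space `X`. -/
def memX (u : ℝ → ℝ) : Prop :=
  memH12 u ∧ Integrable (fun x : ℝ => Real.log (1 + |x|) * (u x) ^ 2)

/-- Squared norm `‖u‖_X² = ‖u‖² + ‖u‖_*²` on `X`. -/
def XnormSq (u : ℝ → ℝ) : ℝ :=
  sobNormSq u + starNormSq u

/-- The logarithmic Choquard functional `W(u) = ∬ ln|x-y| u(x)² u(y)² dx dy`. -/
def Wfun (u : ℝ → ℝ) : ℝ :=
  ∫ p : ℝ × ℝ, Real.log |p.1 - p.2| * (u p.1) ^ 2 * (u p.2) ^ 2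

/-- Primitive `F(t) = ∫₀ᵗ f(s) ds`. -/
def Fprim (f : ℝ → ℝ) (t : ℝ) : ℝ :=
  ∫ s in (0 : ℝ)..t, f s

/-- The energy functional
`E(u) = ½‖u‖² + ¼W(u) − ∫ F(u) − (μ/(1−γ)) ∫ |u|^{1−γ}`. -/
def energy (f : ℝ → ℝ) (μ γ : ℝ) (u : ℝ → ℝ) : ℝ :=
  (1 / 2) * sobNormSq u + (1 / 4) * Wfun u - (∫ x : ℝ, Fprim f (u x))
    - (μ / (1 - γ)) * ∫ x : ℝ, |u x| ^ (1 - γ)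

/-- Bilinear Gagliardo form, the weak form of `(−Δ)^{1/2}`. -/
def bilinGagliardo (u φ : ℝ → ℝ) : ℝ :=
  ∫ p : ℝ × ℝ, (u p.1 - u p.2) * (φ p.1 - φ p.2) / |p.1 - p.2| ^ 2

/-- Weak solution of `(−Δ)^{1/2}u + u + (ln|·|*u²)u = f(u) + μ|u|^{−γ−1}u` in `ℝ`. -/
def isWeakSolution (f : ℝ → ℝ) (μ γ : ℝ) (u : ℝ → ℝ) : Prop :=
  memX u ∧ ∀ φ : ℝ → ℝ, memX φ →
    bilinGagliardo u φ + (∫ x : ℝ, u x * φ x)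
      + (∫ p : ℝ × ℝ, Real.log |p.1 - p.2| * (u p.2) ^ 2 * u p.1 * φ p.1)
    = (∫ x : ℝ, f (u x) * φ x) + μ * ∫ x : ℝ, |u x| ^ (-γ - 1) * u x * φ x

/-- Hypothesis (A1): `f` continuous, `f(0)=0`, `F ≥ 0`, critical exponential growth
with exponent `θ ∈ (0, π]`. -/
def A1hyp (f : ℝ → ℝ) (θ : ℝ) : Prop :=
  Continuous f ∧ f 0 = 0 ∧ (∀ t : ℝ, 0 ≤ Fprim f t) ∧ 0 < θ ∧ θ ≤ Real.pi ∧
  (∀ β : ℝ, θ < β →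
    Tendsto (fun t : ℝ => f t / (Real.exp (β * t ^ 2) - 1))
      (Filter.comap (fun t : ℝ => |t|) Filter.atTop) (nhds 0)) ∧
  (∀ β : ℝ, 0 < β → β < θ →
    Tendsto (fun t : ℝ => f t / (Real.exp (β * t ^ 2) - 1))
      (Filter.comap (fun t : ℝ => |t|) Filter.atTop) Filter.atTop)

/-- Hypothesis (A2): `lim_{t→0} f(t)/|t| = 0`. -/
def A2hyp (f : ℝ → ℝ) : Prop :=
  Tendsto (fun t : ℝ => f t / |t|) (nhdsWithin 0 {(0 : ℝ)}ᶜ) (nhds 0)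

/-- Hypothesis (A3): there is `L > 4` with `t f(t) ≥ L F(t) > 0` for `t ≠ 0`. -/
def A3hyp (f : ℝ → ℝ) : Prop :=
  ∃ L : ℝ, 4 < L ∧ ∀ t : ℝ, t ≠ 0 → 0 < L * Fprim f t ∧ L * Fprim f t ≤ t * f t

/-- Hypothesis (A4) with given `q`, `C_q`: `F(t) ≥ C_q |t|^q`. -/
def A4hyp (f : ℝ → ℝ) (q Cq : ℝ) : Prop :=
  ∀ t : ℝ, Cq * |t| ^ q ≤ Fprim f t

/-- The class `Γ` of paths in `X` (continuous for the `X`-norm) joining `0` to a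
point of negative energy. -/
def pathSet (f : ℝ → ℝ) (μ γ : ℝ) : Set (ℝ → ℝ → ℝ) :=
  {g | (∀ t ∈ Set.Icc (0 : ℝ) 1, memX (g t)) ∧
    (g 0 = fun _ => 0) ∧ energy f μ γ (g 1) < 0 ∧
    ∀ t ∈ Set.Icc (0 : ℝ) 1, ∀ ε : ℝ, 0 < ε → ∃ δ : ℝ, 0 < δ ∧
      ∀ s ∈ Set.Icc (0 : ℝ) 1, |s - t| < δ →
        XnormSq (fun x => g s x - g t x) < ε ^ 2}

/-- The mountain pass level `d = inf_{γ̂∈Γ} max_{t∈[0,1]} E(γ̂(t))`. -/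
def mpLevel (f : ℝ → ℝ) (μ γ : ℝ) : ℝ :=
  sInf {m : ℝ | ∃ g ∈ pathSet f μ γ,
    m = sSup ((fun t => energy f μ γ (g t)) '' Set.Icc (0 : ℝ) 1)}

/-- Weak solution of the auxiliary singular problem
`(−Δ)^{1/2}w + w + (ln|·|*w²)w = μ w^{−γ}`, `w > 0`, in `ℝ`. -/
def isAuxSolution (μ γ : ℝ) (w : ℝ → ℝ) : Prop :=
  memX w ∧ (∀ᵐ x : ℝ, 0 < w x) ∧ ∀ φ : ℝ → ℝ, memX φ →
    bilinGagliardo w φ + (∫ x : ℝ, w x * φ x)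
      + (∫ p : ℝ × ℝ, Real.log |p.1 - p.2| * (w p.2) ^ 2 * w p.1 * φ p.1)
    = μ * ∫ x : ℝ, (w x) ^ (-γ) * φ x

/-!
Since `e^{βu²}` only sees `|u|`, pass to a measurable version `w` of `|u|`, and truncate:
`v = (w - M)₊` has Gagliardo energy `ε` as small as we like. If `a < c`, every point where
`v > c` has, within distance `3 |{v > a}|`, a set of measure `|{v > a}|` where `v ≤ a`; hence
`|{v > c}| (c - a)² ≤ 9 |{v > a}| ε(a, c)`, with `ε(a, c)` the part of the energy joining the two
sets. Chaining this through the levels `j t / n`, `j < n`, whose parts have total at most `ε`,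
AM-GM gives `|{v > t}| ≤ |{v > 0}| (9 ε n / t²)ⁿ`, and `n ≈ R t²` turns this into the Gaussian
tail `|{w > M + t}| ≲ e^{-R t²}`, which integrates `e^{β w²}` as soon as `R > 4β`.
-/

open scoped ENNReal Topology
open Finset

namespace HalfSobolev

def gagliardoEnergy (v : ℝ → ℝ) : ℝ≥0∞ :=
  ∫⁻ p : ℝ × ℝ, ENNReal.ofReal ((v p.1 - v p.2) ^ 2 / |p.1 - p.2| ^ 2)

lemma div_le_setLIntegral_div_sq {κ : ℝ} (hκ : 0 ≤ κ) {B : Set ℝ} (hB : volume Bᶜ ≠ 0)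
    (x : ℝ) :
    ENNReal.ofReal κ / (9 * volume Bᶜ) ≤ ∫⁻ y in B, ENNReal.ofReal (κ / |x - y| ^ 2) := by
  rcases eq_or_ne (volume Bᶜ) ⊤ with htop | hfin
  · simp [htop]
  set b := (volume Bᶜ).toReal
  have hb : 0 < b := ENNReal.toReal_pos hB hfin
  have hvol : volume Bᶜ = ENNReal.ofReal b := (ENNReal.ofReal_toReal hfin).symm
  set I := Set.Icc (x + b) (x + 3 * b)
  -- at most half of the interval `I`, of length `2b`, lies outside `B`
  have hBI : ENNReal.ofReal b ≤ volume (B ∩ I) := by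
    have hcover : volume I ≤ volume (B ∩ I) + volume Bᶜ :=
      (measure_mono fun y hy => by
        by_cases hyB : y ∈ B; exacts [Or.inl ⟨hyB, hy⟩, Or.inr hyB]).trans (measure_union_le _ _)
    rw [Real.volume_Icc, hvol, show x + 3 * b - (x + b) = b + b by ring,
      ENNReal.ofReal_add hb.le hb.le] at hcover
    exact (ENNReal.add_le_add_iff_right ENNReal.ofReal_ne_top).mp hcover
  have hker : ∀ y ∈ B ∩ I,
      ENNReal.ofReal (κ / (9 * b ^ 2)) ≤ ENNReal.ofReal (κ / |x - y| ^ 2) := by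
    rintro y ⟨-, hy₁, hy₂⟩
    have hxy : |x - y| = y - x := by rw [abs_sub_comm, abs_of_nonneg (by linarith)]
    gcongr
    · rw [hxy]; nlinarith
    · rw [hxy]; nlinarith
  calc ENNReal.ofReal κ / (9 * volume Bᶜ)
      = ENNReal.ofReal (κ / (9 * b ^ 2)) * ENNReal.ofReal b := by
        rw [hvol, ← ENNReal.ofReal_mul (by positivity), ← ENNReal.ofReal_ofNat 9,
          ← ENNReal.ofReal_mul (by norm_num), ← ENNReal.ofReal_div_of_pos (by positivity)]
        congr 1
        field_simp
    _ ≤ ENNReal.ofReal (κ / (9 * b ^ 2)) * volume (B ∩ I) := by gcongr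
    _ = ∫⁻ _ in B ∩ I, ENNReal.ofReal (κ / (9 * b ^ 2)) := (setLIntegral_const _ _).symm
    _ ≤ ∫⁻ y in B ∩ I, ENNReal.ofReal (κ / |x - y| ^ 2) :=
        setLIntegral_mono (by fun_prop) hker
    _ ≤ ∫⁻ y in B, ENNReal.ofReal (κ / |x - y| ^ 2) :=
        lintegral_mono_set Set.inter_subset_left

lemma volume_mul_le_setLIntegral_prod {A B : Set ℝ} (hAB : A ⊆ Bᶜ) (hBc : volume Bᶜ ≠ ⊤)
    {κ : ℝ} (hκ : 0 ≤ κ) :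
    volume A * ENNReal.ofReal κ
      ≤ 9 * volume Bᶜ * ∫⁻ p in A ×ˢ B, ENNReal.ofReal (κ / |p.1 - p.2| ^ 2) := by
  rcases eq_or_ne (volume Bᶜ) 0 with h0 | h0
  · simp [measure_mono_null hAB h0]
  have h9 : 9 * volume Bᶜ ≠ 0 := mul_ne_zero (by norm_num) h0
  have h9' : 9 * volume Bᶜ ≠ ⊤ := ENNReal.mul_ne_top (by norm_num) hBc
  rw [Measure.volume_eq_prod, ← Measure.prod_restrict, lintegral_prod _ (by fun_prop)]
  calc volume A * ENNReal.ofReal κ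
      = 9 * volume Bᶜ * ∫⁻ _ in A, ENNReal.ofReal κ / (9 * volume Bᶜ) := by
        rw [setLIntegral_const, ← mul_assoc, ENNReal.mul_div_cancel h9 h9', mul_comm]
    _ ≤ 9 * volume Bᶜ * ∫⁻ x in A, ∫⁻ y in B, ENNReal.ofReal (κ / |x - y| ^ 2) := by
        gcongr with x
        exact div_le_setLIntegral_div_sq hκ h0 x

def bandEnergy (v : ℝ → ℝ) (a c : ℝ) : ℝ≥0∞ :=
  ∫⁻ p in {x | c < v x} ×ˢ {y | v y ≤ a}, ENNReal.ofReal ((c - a) ^ 2 / |p.1 - p.2| ^ 2)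

lemma volume_lt_mul_le_bandEnergy {v : ℝ → ℝ} {a c : ℝ} (hac : a ≤ c)
    (ha : volume {x | a < v x} ≠ ⊤) :
    volume {x | c < v x} * ENNReal.ofReal ((c - a) ^ 2)
      ≤ 9 * volume {x | a < v x} * bandEnergy v a c := by
  have hcompl : {y | v y ≤ a}ᶜ = {x | a < v x} := by ext; simp
  have hsub : {x | c < v x} ⊆ {y | v y ≤ a}ᶜ := fun x hx => by
    rw [hcompl]; exact hac.trans_lt hx
  simpa only [hcompl, bandEnergy] using
    volume_mul_le_setLIntegral_prod hsub (hcompl ▸ ha) (sq_nonneg (c - a))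

lemma card_filter_mul_sq_le {h : ℝ} (hh : 0 < h) (a b : ℝ) (n : ℕ) :
    (#((range n).filter fun j : ℕ => ((j : ℝ) + 1) * h < a ∧ b ≤ j * h) : ℝ) * h ^ 2
      ≤ (a - b) ^ 2 := by
  set T := (range n).filter fun j : ℕ => ((j : ℝ) + 1) * h < a ∧ b ≤ j * h
  rcases T.eq_empty_or_nonempty with hT | hT
  · rw [hT, card_empty, Nat.cast_zero, zero_mul]
    positivity
  have hlevels : ∀ j ∈ T, ((j : ℝ) + 1) * h < a ∧ b ≤ j * h := fun _ hj =>
    (mem_filter.1 hj).2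
  have hj₀ := (hlevels _ (T.min'_mem hT)).2
  have hj₁ := (hlevels _ (T.max'_mem hT)).1
  have hcard : #T + T.min' hT ≤ T.max' hT + 1 := by
    have := card_le_card (t := Icc (T.min' hT) (T.max' hT)) fun j hj =>
      mem_Icc.2 ⟨T.min'_le j hj, T.le_max' j hj⟩
    have hle := T.min'_le _ (T.max'_mem hT)
    rw [Nat.card_Icc] at this
    omega
  have hcard' : (#T : ℝ) + T.min' hT ≤ T.max' hT + 1 := by exact_mod_cast hcard
  have hpos : (1 : ℝ) ≤ #T := by exact_mod_cast hT.card_pos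
  -- the levels `j * h` with `j ∈ T` are `h`-separated and lie between `b` and `a - h`
  have hspan : (#T : ℝ) * h < a - b := by nlinarith
  calc (#T : ℝ) * h ^ 2 ≤ (#T * h) ^ 2 := by nlinarith
    _ ≤ (a - b) ^ 2 := by gcongr

lemma sum_bandEnergy_le {v : ℝ → ℝ} (hv : Measurable v) {h : ℝ} (hh : 0 < h) (n : ℕ) :
    ∑ j ∈ range n, bandEnergy v (j * h) ((j + 1) * h) ≤ gagliardoEnergy v := by
  set k : ℝ × ℝ → ℝ≥0∞ := fun p => ENNReal.ofReal (h ^ 2 / |p.1 - p.2| ^ 2)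
  set S : ℕ → Set (ℝ × ℝ) := fun j =>
    {x | ((j : ℝ) + 1) * h < v x} ×ˢ {y | v y ≤ j * h}
  have hS : ∀ j, MeasurableSet (S j) := fun j =>
    (measurableSet_lt measurable_const hv).prod (measurableSet_le hv measurable_const)
  have hband : ∀ j : ℕ, bandEnergy v (j * h) ((j + 1) * h) = ∫⁻ p, (S j).indicator k p := by
    intro j
    rw [lintegral_indicator (hS j), bandEnergy, show ((j : ℝ) + 1) * h - j * h = h by ring]
  -- a pair `(x, y)` lies in at most `(v x - v y)² / h²` of the products `S j`
  have hpt : ∀ p : ℝ × ℝ, ∑ j ∈ range n, (S j).indicator k p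
      ≤ ENNReal.ofReal ((v p.1 - v p.2) ^ 2 / |p.1 - p.2| ^ 2) := by
    intro p
    simp only [Set.indicator_apply, S, Set.mem_prod, Set.mem_ofPred_eq]
    rw [← sum_filter, sum_const, nsmul_eq_mul, ← ENNReal.ofReal_natCast,
      ← ENNReal.ofReal_mul (Nat.cast_nonneg _), ← mul_div_assoc]
    gcongr
    exact card_filter_mul_sq_le hh _ _ n
  calc ∑ j ∈ range n, bandEnergy v (j * h) ((j + 1) * h)
      = ∫⁻ p, ∑ j ∈ range n, (S j).indicator k p := by
        rw [lintegral_finsetSum _ fun j _ => (by fun_prop : Measurable k).indicator (hS j)]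
        exact sum_congr rfl fun j _ => hband j
    _ ≤ gagliardoEnergy v := lintegral_mono hpt

lemma volume_lt_mul_pow_le_prod_bandEnergy {v : ℝ → ℝ} {h : ℝ} (hh : 0 ≤ h)
    (h0 : volume {x | 0 < v x} ≠ ⊤) (n : ℕ) :
    volume {x | n * h < v x} * ENNReal.ofReal (h ^ 2) ^ n
      ≤ 9 ^ n * volume {x | 0 < v x} * ∏ j ∈ range n, bandEnergy v (j * h) ((j + 1) * h) := by
  induction n with
  | zero => simp
  | succ n ih =>
    have hmono : volume {x | n * h < v x} ≤ volume {x | 0 < v x} :=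
      measure_mono fun x (hx : _ < _) => (by positivity : (0 : ℝ) ≤ n * h).trans_lt hx
    have hstep := volume_lt_mul_le_bandEnergy (by nlinarith : (n : ℝ) * h ≤ (n + 1) * h)
      (ne_top_of_le_ne_top h0 hmono)
    rw [show ((n : ℝ) + 1) * h - n * h = h by ring] at hstep
    push_cast
    calc volume {x | (n + 1) * h < v x} * ENNReal.ofReal (h ^ 2) ^ (n + 1)
        = (volume {x | (n + 1) * h < v x} * ENNReal.ofReal (h ^ 2))
            * ENNReal.ofReal (h ^ 2) ^ n := by ring
      _ ≤ (9 * volume {x | n * h < v x} * bandEnergy v (n * h) ((n + 1) * h))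
            * ENNReal.ofReal (h ^ 2) ^ n := by gcongr
      _ = 9 * bandEnergy v (n * h) ((n + 1) * h)
            * (volume {x | n * h < v x} * ENNReal.ofReal (h ^ 2) ^ n) := by ring
      _ ≤ 9 * bandEnergy v (n * h) ((n + 1) * h) * (9 ^ n * volume {x | 0 < v x}
            * ∏ j ∈ range n, bandEnergy v (j * h) ((j + 1) * h)) := by gcongr
      _ = 9 ^ (n + 1) * volume {x | 0 < v x}
            * ∏ j ∈ range (n + 1), bandEnergy v (j * h) ((j + 1) * h) := by
          rw [prod_range_succ]; ring

lemma prod_le_sum_div_card_pow {ι : Type*} (s : Finset ι) (z : ι → ℝ)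
    (hz : ∀ i ∈ s, 0 ≤ z i) :
    ∏ i ∈ s, z i ≤ ((∑ i ∈ s, z i) / #s) ^ #s := by
  rcases s.eq_empty_or_nonempty with rfl | hs
  · simp
  have hn : (0 : ℝ) < #s := by exact_mod_cast hs.card_pos
  have hgm := Real.geom_mean_le_arith_mean_weighted s (fun _ => (#s : ℝ)⁻¹) z
    (fun _ _ => inv_nonneg.2 hn.le) (by simp [hn.ne']) hz
  rw [Real.finsetProd_rpow s z hz, ← mul_sum, inv_mul_eq_div] at hgm
  rwa [Real.rpow_inv_le_iff_of_pos (prod_nonneg hz) (div_nonneg (sum_nonneg hz) hn.le) hn,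
    Real.rpow_natCast] at hgm

lemma volume_lt_le_mul_pow {v : ℝ → ℝ} (hv : Measurable v) (h0 : volume {x | 0 < v x} ≠ ⊤)
    {E : ℝ} (hE₀ : 0 ≤ E) (hE : gagliardoEnergy v ≤ ENNReal.ofReal E) {t : ℝ} (ht : 0 < t)
    {n : ℕ} (hn : 0 < n) :
    volume {x | t < v x} ≤ volume {x | 0 < v x} * ENNReal.ofReal ((9 * E * n / t ^ 2) ^ n) := by
  set h := t / n
  have hh : 0 < h := by positivity
  have hnh : (n : ℝ) * h = t := mul_div_cancel₀ t (by positivity)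
  set c := fun j : ℕ => bandEnergy v (j * h) ((j + 1) * h)
  have hsum : ∑ j ∈ range n, c j ≤ ENNReal.ofReal E := (sum_bandEnergy_le hv hh n).trans hE
  have hc : ∀ j ∈ range n, c j ≠ ⊤ :=
    ENNReal.sum_ne_top.1 (ne_top_of_le_ne_top ENNReal.ofReal_ne_top hsum)
  have hprod : ∏ j ∈ range n, c j ≤ ENNReal.ofReal ((E / n) ^ n) := by
    rw [← ENNReal.ofReal_toReal (ENNReal.prod_ne_top hc), ENNReal.toReal_prod]
    refine ENNReal.ofReal_le_ofReal
      ((prod_le_sum_div_card_pow _ _ fun _ _ => ENNReal.toReal_nonneg).trans ?_)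
    rw [card_range, ← ENNReal.toReal_sum hc]
    gcongr
    exact ENNReal.toReal_le_of_le_ofReal hE₀ hsum
  have hchain := volume_lt_mul_pow_le_prod_bandEnergy hh.le h0 n
  rw [hnh] at hchain
  have hq₀ : ENNReal.ofReal (h ^ 2) ^ n ≠ 0 := pow_ne_zero _ (by simp [hh.ne'])
  have hq : ENNReal.ofReal (h ^ 2) ^ n ≠ ⊤ := ENNReal.pow_ne_top ENNReal.ofReal_ne_top
  refine (ENNReal.mul_le_mul_iff_left hq₀ hq).1 (hchain.trans ?_)
  calc 9 ^ n * volume {x | 0 < v x} * ∏ j ∈ range n, c j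
      ≤ 9 ^ n * volume {x | 0 < v x} * ENNReal.ofReal ((E / n) ^ n) := by gcongr
    _ = ENNReal.ofReal (9 ^ n * (E / n) ^ n) * volume {x | 0 < v x} := by
        rw [ENNReal.ofReal_mul (by positivity), ENNReal.ofReal_pow (by norm_num : (0 : ℝ) ≤ 9),
          ENNReal.ofReal_ofNat]
        ring
    _ = ENNReal.ofReal ((9 * E * n / t ^ 2) ^ n * (h ^ 2) ^ n) * volume {x | 0 < v x} := by
        rw [← hnh, ← mul_pow, ← mul_pow]
        field_simp
    _ = volume {x | 0 < v x} * ENNReal.ofReal ((9 * E * n / t ^ 2) ^ n)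
          * ENNReal.ofReal (h ^ 2) ^ n := by
        rw [ENNReal.ofReal_mul (by positivity), ENNReal.ofReal_pow (sq_nonneg h)]
        ring

lemma volume_lt_le_mul_exp {v : ℝ → ℝ} (hv : Measurable v) (h0 : volume {x | 0 < v x} ≠ ⊤)
    {R : ℝ} (hR : 0 < R) (hE : gagliardoEnergy v ≤ ENNReal.ofReal (exp (-1) / (9 * R)))
    {t : ℝ} (ht : 0 ≤ t) :
    volume {x | t < v x}
      ≤ volume {x | 0 < v x} * ENNReal.ofReal (exp 1) * ENNReal.ofReal (exp (-(R * t ^ 2))) := by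
  rw [mul_assoc, ← ENNReal.ofReal_mul (exp_nonneg _), ← exp_add, ← sub_eq_add_neg]
  set n := ⌊R * t ^ 2⌋₊
  have hn : R * t ^ 2 < n + 1 := Nat.lt_floor_add_one _
  rcases Nat.eq_zero_or_pos n with hn₀ | hn₀
  · have hexp : 1 ≤ exp (1 - R * t ^ 2) :=
      one_le_exp (by rw [hn₀, Nat.cast_zero] at hn; linarith)
    calc volume {x | t < v x} ≤ volume {x | 0 < v x} :=
          measure_mono fun x (hx : t < v x) => ht.trans_lt hx
      _ ≤ volume {x | 0 < v x} * ENNReal.ofReal (exp (1 - R * t ^ 2)) :=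
          le_mul_of_one_le_right' (ENNReal.one_le_ofReal.2 hexp)
  have hRt : (n : ℝ) ≤ R * t ^ 2 := Nat.floor_le (by positivity)
  have hn₁ : (1 : ℝ) ≤ n := by exact_mod_cast hn₀
  have ht₀ : 0 < t := ht.lt_of_ne (by rintro rfl; norm_num at hRt; linarith)
  refine (volume_lt_le_mul_pow hv h0 (by positivity) hE ht₀ hn₀).trans ?_
  gcongr
  -- the choice `n ≈ R t²` makes every factor at most `e⁻¹`
  calc (9 * (exp (-1) / (9 * R)) * n / t ^ 2) ^ n ≤ exp (-1) ^ n := by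
        gcongr
        rw [div_le_iff₀ (by positivity)]
        field_simp
        nlinarith [exp_pos (-1)]
    _ = exp (-n) := by rw [← exp_nat_mul]; ring_nf
    _ ≤ exp (1 - R * t ^ 2) := by gcongr; linarith

lemma sq_sub_le_of_lipschitzWith {φ : ℝ → ℝ} (hφ : LipschitzWith 1 φ) (a b : ℝ) :
    (φ a - φ b) ^ 2 ≤ (a - b) ^ 2 := by
  have := hφ.dist_le_mul a b
  rw [NNReal.coe_one, one_mul, Real.dist_eq, Real.dist_eq] at this
  exact sq_le_sq.2 this

lemma gagliardoEnergy_comp_le {φ : ℝ → ℝ} (hφ : LipschitzWith 1 φ) (v : ℝ → ℝ) :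
    gagliardoEnergy (fun x => φ (v x)) ≤ gagliardoEnergy v :=
  lintegral_mono fun _ => ENNReal.ofReal_le_ofReal
    (div_le_div_of_nonneg_right (sq_sub_le_of_lipschitzWith hφ _ _) (by positivity))

lemma gagliardoEnergy_congr_ae {v w : ℝ → ℝ} (h : v =ᵐ[volume] w) :
    gagliardoEnergy v = gagliardoEnergy w := by
  refine lintegral_congr_ae ?_
  rw [Measure.volume_eq_prod]
  filter_upwards [Measure.quasiMeasurePreserving_fst.ae_eq_comp h,
    Measure.quasiMeasurePreserving_snd.ae_eq_comp h] with p h₁ h₂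
  simp only [Function.comp_apply] at h₁ h₂
  rw [h₁, h₂]

lemma tendsto_gagliardoEnergy_truncation {w : ℝ → ℝ} (hw : Measurable w)
    (hE : gagliardoEnergy w ≠ ⊤) :
    Tendsto (fun M : ℝ => gagliardoEnergy fun x => max (w x - M) 0) atTop (𝓝 0) := by
  have hlip : ∀ M : ℝ, LipschitzWith 1 fun y : ℝ => max (y - M) 0 := fun M =>
    (IsometryEquiv.subRight M).isometry.lipschitz.max_const 0
  have hlim : ∀ p : ℝ × ℝ, Tendsto (fun M : ℝ => ENNReal.ofReal
      ((max (w p.1 - M) 0 - max (w p.2 - M) 0) ^ 2 / |p.1 - p.2| ^ 2)) atTop (𝓝 0) := by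
    intro p
    refine tendsto_const_nhds.congr' ?_
    filter_upwards [eventually_ge_atTop (max (w p.1) (w p.2))] with M hM
    rw [max_eq_right (by linarith [le_max_left (w p.1) (w p.2)]),
      max_eq_right (by linarith [le_max_right (w p.1) (w p.2)])]
    simp
  simpa only [gagliardoEnergy, lintegral_zero] using
    tendsto_lintegral_filter_of_dominated_convergence (μ := volume) (f := fun _ => 0)
      (F := fun (M : ℝ) (p : ℝ × ℝ) => ENNReal.ofReal
        ((max (w p.1 - M) 0 - max (w p.2 - M) 0) ^ 2 / |p.1 - p.2| ^ 2))
      (fun p => ENNReal.ofReal ((w p.1 - w p.2) ^ 2 / |p.1 - p.2| ^ 2))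
      (Eventually.of_forall fun M => by fun_prop)
      (Eventually.of_forall fun M => ae_of_all _ fun p => ENNReal.ofReal_le_ofReal
        (div_le_div_of_nonneg_right (sq_sub_le_of_lipschitzWith (hlip M) _ _) (by positivity)))
      hE (ae_of_all _ hlim)

lemma exp_sub_one_le_mul_exp (z : ℝ) : exp z - 1 ≤ z * exp z := by
  have h := mul_le_mul_of_nonneg_right (one_sub_le_exp_neg z) (exp_pos z).le
  rw [← exp_add, neg_add_cancel, exp_zero] at h
  linarith

lemma ofReal_exp_sq_sub_one_le {β : ℝ} (hβ : 0 ≤ β) (K : ℝ) {y : ℝ} (hy : 0 ≤ y) :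
    ENNReal.ofReal (exp (β * y ^ 2) - 1)
      ≤ ENNReal.ofReal (β * exp (β * K ^ 2) * y ^ 2)
        + ∑' j : ℕ, (Set.Ioi (K + j - 1)).indicator
            (fun _ => ENNReal.ofReal (exp (β * (K + j) ^ 2))) y := by
  rcases le_or_gt y K with hyK | hKy
  · refine le_add_right (ENNReal.ofReal_le_ofReal ?_)
    calc exp (β * y ^ 2) - 1 ≤ β * y ^ 2 * exp (β * y ^ 2) := exp_sub_one_le_mul_exp _
      _ ≤ β * y ^ 2 * exp (β * K ^ 2) := by gcongr
      _ = β * exp (β * K ^ 2) * y ^ 2 := by ring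
  · set j := ⌈y - K⌉₊
    have hj₁ : K + j - 1 < y := by linarith [Nat.ceil_lt_add_one (sub_nonneg.2 hKy.le)]
    have hj₂ : y ≤ K + j := by linarith [Nat.le_ceil (y - K)]
    refine le_add_left ((ENNReal.le_tsum j).trans' ?_)
    rw [Set.indicator_of_mem (Set.mem_Ioi.2 hj₁)]
    exact ENNReal.ofReal_le_ofReal (by
      have : exp (β * y ^ 2) ≤ exp (β * (K + j) ^ 2) := by gcongr
      linarith)

lemma lintegral_exp_sq_sub_one_ne_top_of_tail {w : ℝ → ℝ} (hw : Measurable w)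
    (hw₀ : ∀ x, 0 ≤ w x) (hL2 : ∫⁻ x, ENNReal.ofReal (w x ^ 2) ≠ ⊤) {β R M : ℝ} (hβ : 0 ≤ β)
    (hR : 4 * β < R) (hM : 0 ≤ M) {C : ℝ≥0∞} (hC : C ≠ ⊤)
    (htail : ∀ t, 0 ≤ t → volume {x | M + t < w x} ≤ C * ENNReal.ofReal (exp (-(R * t ^ 2)))) :
    ∫⁻ x, ENNReal.ofReal (exp (β * w x ^ 2) - 1) ≠ ⊤ := by
  set K := 2 * M + 2
  set a := fun j : ℕ => ENNReal.ofReal (exp (β * (K + j) ^ 2))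
  set r := ENNReal.ofReal (exp (-(R - 4 * β)))
  -- above `K ≥ 2M`, the level `M + T` satisfies `(M + T)² ≤ 4T²`, so `4β < R` wins
  have hterm : ∀ j : ℕ, a j * volume {x | K + j - 1 < w x} ≤ C * r ^ j := by
    intro j
    set T := M + 1 + j
    have hjT : (j : ℝ) + 1 ≤ T := by simp only [T]; linarith
    have hKT : K + j ≤ 2 * T := by simp only [K, T]; linarith [Nat.cast_nonneg (α := ℝ) j]
    have hexp : β * (K + j) ^ 2 + -(R * T ^ 2) ≤ j * -(R - 4 * β) := by
      have h₁ : β * (K + j) ^ 2 ≤ β * (2 * T) ^ 2 := by gcongr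
      have h₂ : (j : ℝ) ≤ T ^ 2 := by nlinarith
      nlinarith [mul_le_mul_of_nonneg_left h₂ (sub_nonneg.2 hR.le)]
    calc a j * volume {x | K + j - 1 < w x}
        ≤ a j * (C * ENNReal.ofReal (exp (-(R * T ^ 2)))) := by
          rw [show K + j - 1 = M + T by ring]
          gcongr
          exact htail T (by positivity)
      _ = C * ENNReal.ofReal (exp (β * (K + j) ^ 2 + -(R * T ^ 2))) := by
          rw [mul_left_comm, exp_add, ENNReal.ofReal_mul (exp_nonneg _)]
      _ ≤ C * r ^ j := by
          rw [← ENNReal.ofReal_pow (exp_nonneg _), ← exp_nat_mul]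
          gcongr
  have hr : r < 1 := ENNReal.ofReal_lt_one.2 (Real.exp_lt_one_iff.2 (by linarith))
  have hshell : ∀ j : ℕ, MeasurableSet {x | K + j - 1 < w x} := fun j =>
    measurableSet_lt measurable_const hw
  rw [← lt_top_iff_ne_top]
  calc ∫⁻ x, ENNReal.ofReal (exp (β * w x ^ 2) - 1)
      ≤ ∫⁻ x, (ENNReal.ofReal (β * exp (β * K ^ 2)) * ENNReal.ofReal (w x ^ 2)
          + ∑' j : ℕ, {x | K + j - 1 < w x}.indicator (fun _ => a j) x) := by
        refine lintegral_mono fun x => ?_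
        rw [← ENNReal.ofReal_mul (by positivity)]
        exact ofReal_exp_sq_sub_one_le hβ K (hw₀ x)
    _ = ENNReal.ofReal (β * exp (β * K ^ 2)) * (∫⁻ x, ENNReal.ofReal (w x ^ 2))
          + ∑' j : ℕ, a j * volume {x | K + j - 1 < w x} := by
        rw [lintegral_add_left (by fun_prop), lintegral_const_mul _ (by fun_prop),
          lintegral_tsum fun j => (measurable_const.indicator (hshell j)).aemeasurable]
        simp_rw [lintegral_indicator_const (hshell _)]
    _ ≤ ENNReal.ofReal (β * exp (β * K ^ 2)) * (∫⁻ x, ENNReal.ofReal (w x ^ 2))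
          + ∑' j : ℕ, C * r ^ j := by grw [ENNReal.tsum_le_tsum hterm]
    _ < ⊤ := by
        rw [ENNReal.tsum_mul_left, ENNReal.tsum_geometric]
        have hgeom : (1 - r)⁻¹ ≠ ⊤ := ENNReal.inv_ne_top.2 (tsub_pos_iff_lt.2 hr).ne'
        exact ENNReal.add_lt_top.2 ⟨ENNReal.mul_lt_top ENNReal.ofReal_lt_top hL2.lt_top,
          ENNReal.mul_lt_top hC.lt_top hgeom.lt_top⟩

theorem lintegral_exp_sq_sub_one_ne_top {w : ℝ → ℝ} (hw : Measurable w) (hw₀ : ∀ x, 0 ≤ w x)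
    (hL2 : ∫⁻ x, ENNReal.ofReal (w x ^ 2) ≠ ⊤) (hE : gagliardoEnergy w ≠ ⊤) {β : ℝ}
    (hβ : 0 ≤ β) :
    ∫⁻ x, ENNReal.ofReal (exp (β * w x ^ 2) - 1) ≠ ⊤ := by
  set R := 4 * β + 1
  have hR : 0 < R := by positivity
  obtain ⟨M, hεM, hM⟩ : ∃ M : ℝ, gagliardoEnergy (fun x => max (w x - M) 0)
      ≤ ENNReal.ofReal (exp (-1) / (9 * R)) ∧ 1 ≤ M :=
    (((tendsto_gagliardoEnergy_truncation hw hE).eventually_le_const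
      (ENNReal.ofReal_pos.2 (by positivity))).and (eventually_ge_atTop 1)).exists
  have hlevel : ∀ t, 0 ≤ t → {x | t < max (w x - M) 0} = {x | M + t < w x} := by
    intro t ht
    ext x
    simp only [Set.mem_ofPred_eq, lt_max_iff, not_lt.2 ht, or_false]
    constructor <;> intro h <;> linarith
  have h0 : volume {x | M < w x} ≠ ⊤ := by
    refine ne_top_of_le_ne_top hL2 ?_
    calc volume {x | M < w x} ≤ volume {x | 1 ≤ ENNReal.ofReal (w x ^ 2)} :=
          measure_mono fun x (hx : M < w x) => ENNReal.one_le_ofReal.2 (by nlinarith)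
      _ = 1 * volume {x | 1 ≤ ENNReal.ofReal (w x ^ 2)} := (one_mul _).symm
      _ ≤ ∫⁻ x, ENNReal.ofReal (w x ^ 2) :=
          mul_meas_ge_le_lintegral₀ (hw.pow_const 2).ennreal_ofReal.aemeasurable 1
  refine lintegral_exp_sq_sub_one_ne_top_of_tail hw hw₀ hL2 hβ (by linarith : 4 * β < R)
    (by linarith : 0 ≤ M) (C := volume {x | M < w x} * ENNReal.ofReal (exp 1))
    (ENNReal.mul_ne_top h0 ENNReal.ofReal_ne_top) fun t ht => ?_
  have := volume_lt_le_mul_exp (by fun_prop) (by rwa [hlevel 0 le_rfl, add_zero]) hR hεM ht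
  rwa [hlevel t ht, hlevel 0 le_rfl, add_zero] at this

end HalfSobolev

open HalfSobolev in
/-- for every `β > 0` and `u ∈ H^{1/2}(ℝ)`,
`∫ (e^{βu²} − 1) dx` is finite. -/
theorem exp_integral_finite (β : ℝ) (hβ : 0 < β) (u : ℝ → ℝ) (hu : memH12 u) :
    (∫⁻ x : ℝ, ENNReal.ofReal (Real.exp (β * (u x) ^ 2) - 1)) < ⊤ := by
  -- `u` itself need not be measurable, but `|u| = √(u²)` has a measurable version
  obtain ⟨g, hg, hug⟩ := hu.1.aestronglyMeasurable.aemeasurable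
  set w := fun x => √(g x)
  have hwu : w =ᵐ[volume] fun x => |u x| := by
    filter_upwards [hug] with x hx
    rw [show w x = √(g x) from rfl, ← hx, sqrt_sq_eq_abs]
  have hw2 : (fun x => w x ^ 2) =ᵐ[volume] fun x => u x ^ 2 := by
    filter_upwards [hwu] with x hx
    rw [hx, sq_abs]
  have hL2 : ∫⁻ x, ENNReal.ofReal (w x ^ 2) ≠ ⊤ := by
    rw [lintegral_congr_ae (by filter_upwards [hw2] with x hx; rw [hx])]
    exact hu.1.lintegral_lt_top.ne
  have hE : gagliardoEnergy w ≠ ⊤ := by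
    rw [gagliardoEnergy_congr_ae hwu]
    exact ne_top_of_le_ne_top hu.2.lintegral_lt_top.ne
      (gagliardoEnergy_comp_le lipschitzWith_one_norm u)
  rw [lintegral_congr_ae (by filter_upwards [hw2] with x hx; rw [← hx]), lt_top_iff_ne_top]
  exact lintegral_exp_sq_sub_one_ne_top hg.sqrt (fun x => sqrt_nonneg _) hL2 hE hβ.le
end
end

section
/- Let (u_n) be a sequence in L²(ℝ) and u ∈ L²(ℝ), u ≠ 0, such that u_n → u pointwise almost everywhere on ℝ. Let (v_n) be a bounded sequence in L²(ℝ) such that sup_n A(u_n², v_n²) < ∞, where A(w,z) = ∬_{ℝ×ℝ} ln(1+|x−y|) w(x) z(y) dx dy. Then there exist n₀ ∈ ℕ and C > 0 such that ‖v_n‖_* < C for every n ≥ n₀, where ‖v‖_*² = ∫_ℝ ln(1+|x|) v(x)² dx. Moreover, if in addition A(u_n², v_n²) → 0 and ‖v_n‖_{L²} → 0 as n → ∞, then ‖v_n‖_* → 0 as n → ∞. -/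
open MeasureTheory Real Filter

noncomputable section

/-- The bilinear form `A(w,z) = ∬ ln(1+|x−y|) w(x) z(y) dx dy`, as a value in `[0,∞]`. -/
def Alin (w z : ℝ → ℝ) : ENNReal :=
  ∫⁻ p : ℝ × ℝ, ENNReal.ofReal (Real.log (1 + |p.1 - p.2|) * w p.1 * z p.2)

/-- `‖v‖_*² = ∫ ln(1+|x|) v(x)² dx`, as a value in `[0,∞]`. -/
def starLin (v : ℝ → ℝ) : ENNReal :=
  ∫⁻ x : ℝ, ENNReal.ofReal (Real.log (1 + |x|) * (v x) ^ 2)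

open scoped ENNReal

/-! Pointwise convergence `u n → w ≠ 0` and Fatou's lemma give a ball `B = [-R, R]` and `c > 0`
with `∫_B u n ^ 2 ≥ c` for all large `n`. Integrating
`log (1 + |y|) ≤ log (1 + |x - y|) + log (1 + R)` (valid for `x ∈ B`) against
`u n x ^ 2 * v n y ^ 2` over `B × ℝ` and dividing by `∫_B u n ^ 2` yields
`‖v n‖_*² ≤ A (u n ^ 2, v n ^ 2) / c + log (1 + R) * ‖v n‖₂²`,
from which both claims follow. -/

theorem Real.log_one_add_abs_le_add (x y : ℝ) :
    Real.log (1 + |y|) ≤ Real.log (1 + |x - y|) + Real.log (1 + |x|) := by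
  rw [← Real.log_mul (by positivity) (by positivity)]
  gcongr
  nlinarith [abs_sub_abs_le_abs_sub y x, abs_sub_comm x y, abs_nonneg (x - y), abs_nonneg x,
    mul_nonneg (abs_nonneg (x - y)) (abs_nonneg x)]

section

variable {α : Type*} [MeasurableSpace α] {μ : Measure α}

theorem lintegral_ofReal_sq_eq_eLpNorm_sq (f : α → ℝ) :
    ∫⁻ x, ENNReal.ofReal (f x ^ 2) ∂μ = eLpNorm f 2 μ ^ 2 := by
  rw [eLpNorm_eq_eLpNorm' two_ne_zero ENNReal.ofNat_ne_top, ENNReal.toReal_ofNat,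
    ← ENNReal.rpow_two, ← lintegral_rpow_enorm_eq_rpow_eLpNorm' two_pos]
  congr 1 with x
  rw [ENNReal.rpow_two, Real.enorm_eq_ofReal_abs, ← ENNReal.ofReal_pow (abs_nonneg _), sq_abs]

theorem setLIntegral_ofReal_sq_ne_top {f : α → ℝ} (hf : MemLp f 2 μ) (s : Set α) :
    ∫⁻ x in s, ENNReal.ofReal (f x ^ 2) ∂μ ≠ ∞ :=
  ne_top_of_le_ne_top ((lintegral_ofReal_sq_eq_eLpNorm_sq f).trans_ne
    (ENNReal.pow_ne_top hf.eLpNorm_ne_top)) (setLIntegral_le_lintegral _ _)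

theorem lintegral_ofReal_sq_pos {f : α → ℝ} (hf : AEMeasurable f μ) (hf0 : ¬ f =ᵐ[μ] 0) :
    0 < ∫⁻ x, ENNReal.ofReal (f x ^ 2) ∂μ := by
  rw [pos_iff_ne_zero, Ne, lintegral_eq_zero_iff' (hf.pow_const 2).ennreal_ofReal]
  refine fun h => hf0 (h.mono fun x hx => ?_)
  simpa using hx

theorem exists_setLIntegral_closedBall_pos [PseudoMetricSpace α] {f : α → ℝ≥0∞}
    (hf : 0 < ∫⁻ x, f x ∂μ) (x₀ : α) :
    ∃ n : ℕ, 0 < ∫⁻ x in Metric.closedBall x₀ n, f x ∂μ := by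
  by_contra! h
  refine hf.ne' (le_antisymm ?_ zero_le)
  calc ∫⁻ x, f x ∂μ = ∫⁻ x in ⋃ n : ℕ, Metric.closedBall x₀ n, f x ∂μ := by
        rw [Metric.iUnion_closedBall_nat, Measure.restrict_univ]
    _ ≤ ∑' n : ℕ, ∫⁻ x in Metric.closedBall x₀ n, f x ∂μ := lintegral_iUnion_le _ _
    _ ≤ 0 := by simp [nonpos_iff_eq_zero.1 (h _)]

theorem eventually_lt_lintegral_of_tendsto_ae {ι : Type*} {l : Filter ι} [l.IsCountablyGenerated]
    [l.NeBot] {f : ι → α → ℝ≥0∞} {g : α → ℝ≥0∞}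
    (hf : ∀ i, AEMeasurable (f i) μ)
    (hlim : ∀ᵐ x ∂μ, Tendsto (fun i => f i x) l (nhds (g x)))
    {c : ℝ≥0∞} (hc : c < ∫⁻ x, g x ∂μ) : ∀ᶠ i in l, c < ∫⁻ x, f i x ∂μ := by
  refine eventually_lt_of_lt_liminf (hc.trans_le ?_)
  calc ∫⁻ x, g x ∂μ = ∫⁻ x, liminf (fun i => f i x) l ∂μ :=
        lintegral_congr_ae (hlim.mono fun x hx => hx.liminf_eq.symm)
    _ ≤ liminf (fun i => ∫⁻ x, f i x ∂μ) l := lintegral_liminf_le' hf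

end

theorem setLIntegral_sq_mul_starLin_le {a b : ℝ → ℝ} (ha : AEMeasurable a)
    (hb : AEMeasurable b) {s : Set ℝ} (hs : MeasurableSet s) {R : ℝ}
    (hsR : ∀ x ∈ s, |x| ≤ R) :
    (∫⁻ x in s, ENNReal.ofReal (a x ^ 2)) * starLin b ≤
      Alin (fun x => a x ^ 2) (fun y => b y ^ 2) +
        (∫⁻ x in s, ENNReal.ofReal (a x ^ 2)) *
          (ENNReal.ofReal (Real.log (1 + R)) * ∫⁻ y, ENNReal.ofReal (b y ^ 2)) := by
  set f : ℝ → ℝ≥0∞ := fun x => ENNReal.ofReal (a x ^ 2)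
  set g : ℝ → ℝ≥0∞ := fun y => ENNReal.ofReal (b y ^ 2)
  set ℓ : ℝ → ℝ≥0∞ := fun t => ENNReal.ofReal (Real.log (1 + |t|))
  set L := ENNReal.ofReal (Real.log (1 + R))
  have hf : AEMeasurable f := (ha.pow_const 2).ennreal_ofReal
  have hg : AEMeasurable g := (hb.pow_const 2).ennreal_ofReal
  have hlog (t : ℝ) : 0 ≤ Real.log (1 + |t|) := Real.log_nonneg (by simp)
  have hℓ (x y : ℝ) (hx : x ∈ s) : ℓ y ≤ ℓ (x - y) + L := by
    have hxR : Real.log (1 + |x|) ≤ Real.log (1 + R) :=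
      Real.log_le_log (by positivity) (by linarith [hsR x hx])
    rw [← ENNReal.ofReal_add (hlog _) ((hlog x).trans hxR)]
    exact ENNReal.ofReal_le_ofReal ((Real.log_one_add_abs_le_add x y).trans (by linarith))
  have hAlin : Alin (fun x => a x ^ 2) (fun y => b y ^ 2) =
      ∫⁻ x, ∫⁻ y, f x * (ℓ (x - y) * g y) := by
    rw [Alin, Measure.volume_eq_prod]
    refine (lintegral_congr fun p => ?_).trans
      (lintegral_prod (fun p : ℝ × ℝ => f p.1 * (ℓ (p.1 - p.2) * g p.2)) ?_)
    · rw [← ENNReal.ofReal_mul (hlog _), ← ENNReal.ofReal_mul (sq_nonneg _)]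
      ring_nf
    · exact (hf.comp_quasiMeasurePreserving Measure.quasiMeasurePreserving_fst).mul
        ((by fun_prop : Measurable fun p : ℝ × ℝ => ℓ (p.1 - p.2)).aemeasurable.mul
          (hg.comp_quasiMeasurePreserving Measure.quasiMeasurePreserving_snd))
  have hstar : starLin b = ∫⁻ y, ℓ y * g y :=
    lintegral_congr fun y => ENNReal.ofReal_mul (hlog y)
  calc (∫⁻ x in s, f x) * starLin b = ∫⁻ x in s, ∫⁻ y, f x * (ℓ y * g y) := by
        rw [← lintegral_mul_const'' _ hf.restrict, hstar]
        exact lintegral_congr fun x => (lintegral_const_mul' _ _ ENNReal.ofReal_ne_top).symm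
    _ ≤ ∫⁻ x in s, ∫⁻ y, (f x * (ℓ (x - y) * g y) + f x * L * g y) := by
        refine setLIntegral_mono' hs fun x hx => lintegral_mono fun y => ?_
        rw [mul_assoc, ← mul_add, ← add_mul]
        gcongr
        exact hℓ x y hx
    _ = (∫⁻ x in s, ∫⁻ y, f x * (ℓ (x - y) * g y)) +
          (∫⁻ x in s, f x) * (L * ∫⁻ y, g y) := by
        have hsplit (x : ℝ) : ∫⁻ y, (f x * (ℓ (x - y) * g y) + f x * L * g y) =
            (∫⁻ y, f x * (ℓ (x - y) * g y)) + f x * (L * ∫⁻ y, g y) := by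
          rw [lintegral_add_right' _ (hg.const_mul _), lintegral_const_mul' _ _
            (ENNReal.mul_ne_top ENNReal.ofReal_ne_top ENNReal.ofReal_ne_top), mul_assoc]
        simp_rw [hsplit]
        rw [lintegral_add_right' (fun x => ∫⁻ y, f x * (ℓ (x - y) * g y))
          (hf.mul_const _).restrict, lintegral_mul_const'' _ hf.restrict]
    _ ≤ _ := by
        rw [hAlin]
        exact add_le_add_left (setLIntegral_le_lintegral _ _) _

theorem starLin_le_Alin_div_add {a b : ℝ → ℝ} (ha : AEMeasurable a) (hb : AEMeasurable b)
    {s : Set ℝ} (hs : MeasurableSet s) {R : ℝ} (hsR : ∀ x ∈ s, |x| ≤ R) {c : ℝ≥0∞}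
    (hc0 : c ≠ 0) (hc : c ≤ ∫⁻ x in s, ENNReal.ofReal (a x ^ 2))
    (hfin : ∫⁻ x in s, ENNReal.ofReal (a x ^ 2) ≠ ∞) :
    starLin b ≤ Alin (fun x => a x ^ 2) (fun y => b y ^ 2) / c +
      ENNReal.ofReal (Real.log (1 + R)) * eLpNorm b 2 volume ^ 2 := by
  set m := ∫⁻ x in s, ENNReal.ofReal (a x ^ 2)
  have hm0 : m ≠ 0 := ne_bot_of_le_ne_bot hc0 hc
  have key := setLIntegral_sq_mul_starLin_le ha hb hs hsR
  rw [lintegral_ofReal_sq_eq_eLpNorm_sq (μ := volume) b] at key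
  calc starLin b
      ≤ (Alin (fun x => a x ^ 2) (fun y => b y ^ 2) +
          (ENNReal.ofReal (Real.log (1 + R)) * eLpNorm b 2 volume ^ 2) * m) / m := by
        rw [ENNReal.le_div_iff_mul_le (Or.inl hm0) (Or.inl hfin), mul_comm, mul_comm _ m]
        exact key
    _ = Alin (fun x => a x ^ 2) (fun y => b y ^ 2) / m +
          ENNReal.ofReal (Real.log (1 + R)) * eLpNorm b 2 volume ^ 2 := by
        rw [ENNReal.add_div, ENNReal.mul_div_cancel_right hm0 hfin]
    _ ≤ _ := by gcongr

theorem exists_starLin_le_Alin_div_add {u v : ℕ → ℝ → ℝ} {w : ℝ → ℝ}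
    (hu : ∀ n, MemLp (u n) 2 volume) (hw0 : ¬ w =ᵐ[volume] 0)
    (hptw : ∀ᵐ x : ℝ, Tendsto (fun n => u n x) atTop (nhds (w x)))
    (hv : ∀ n, AEMeasurable (v n)) :
    ∃ c L : ℝ≥0∞, c ≠ 0 ∧ L ≠ ∞ ∧ ∀ᶠ n in atTop, starLin (v n) ≤
      Alin (fun x => u n x ^ 2) (fun y => v n y ^ 2) / c + L * eLpNorm (v n) 2 volume ^ 2 := by
  have hum (n : ℕ) : AEMeasurable (u n) := (hu n).aemeasurable
  have hw : AEMeasurable w := aemeasurable_of_tendsto_metrizable_ae' hum hptw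
  obtain ⟨R, hR⟩ :=
    exists_setLIntegral_closedBall_pos (lintegral_ofReal_sq_pos hw hw0) (0 : ℝ)
  obtain ⟨c, hc0, hc⟩ := exists_between hR
  have hlim : ∀ᵐ x ∂volume.restrict (Metric.closedBall 0 R),
      Tendsto (fun n => ENNReal.ofReal (u n x ^ 2)) atTop (nhds (ENNReal.ofReal (w x ^ 2))) :=
    ae_restrict_of_ae <| hptw.mono fun x hx =>
      (ENNReal.continuous_ofReal.tendsto _).comp (hx.pow 2)
  refine ⟨c, ENNReal.ofReal (Real.log (1 + R)), hc0.ne', ENNReal.ofReal_ne_top, ?_⟩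
  filter_upwards [eventually_lt_lintegral_of_tendsto_ae
    (fun n => ((hum n).pow_const 2).ennreal_ofReal.restrict) hlim hc] with n hn
  exact starLin_le_Alin_div_add (hum n) (hv n) Metric.isClosed_closedBall.measurableSet
    (fun x hx => by simpa using hx) hc0.ne' hn.le (setLIntegral_ofReal_sq_ne_top (hu n) _)

theorem star_norm_control_general (u v : ℕ → ℝ → ℝ) (w : ℝ → ℝ)
    (hu : ∀ n, MemLp (u n) 2 volume)
    (hw0 : ¬ (w =ᵐ[volume] (fun _ => 0)))
    (hptw : ∀ᵐ x : ℝ, Tendsto (fun n => u n x) atTop (nhds (w x)))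
    (hv : ∀ n, MemLp (v n) 2 volume)
    (hvbdd : ∃ M : ℝ, ∀ n, eLpNorm (v n) 2 volume ≤ ENNReal.ofReal M)
    (hA : ∃ S : ℝ, ∀ n,
      Alin (fun x => (u n x) ^ 2) (fun x => (v n x) ^ 2) ≤ ENNReal.ofReal S) :
    (∃ n₀ : ℕ, ∃ C : ℝ, 0 < C ∧ ∀ n, n₀ ≤ n →
      starLin (v n) ^ (1 / 2 : ℝ) < ENNReal.ofReal C) ∧
    ((Tendsto (fun n => Alin (fun x => (u n x) ^ 2) (fun x => (v n x) ^ 2))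
        atTop (nhds 0)) →
      (Tendsto (fun n => eLpNorm (v n) 2 volume) atTop (nhds 0)) →
      Tendsto (fun n => starLin (v n) ^ (1 / 2 : ℝ)) atTop (nhds 0)) := by
  obtain ⟨c, L, hc0, hL, hbound⟩ :=
    exists_starLin_le_Alin_div_add hu hw0 hptw fun n => (hv n).aemeasurable
  refine ⟨?_, fun hA0 hv0 => ?_⟩
  · obtain ⟨n₀, hn₀⟩ := eventually_atTop.1 hbound
    obtain ⟨M, hM⟩ := hvbdd
    obtain ⟨S, hS⟩ := hA
    have hD : (ENNReal.ofReal S / c + L * ENNReal.ofReal M ^ 2) ^ (1 / 2 : ℝ) < ∞ :=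
      ENNReal.rpow_lt_top_of_nonneg (by norm_num) <| ENNReal.add_ne_top.2
        ⟨ENNReal.div_ne_top ENNReal.ofReal_ne_top hc0, ENNReal.mul_ne_top hL (by simp)⟩
    obtain ⟨C, -, hDC, -⟩ := ENNReal.lt_iff_exists_real_btwn.1 hD
    refine ⟨n₀, C, ENNReal.ofReal_pos.1 (zero_le.trans_lt hDC), fun n hn => hDC.trans_le' ?_⟩
    gcongr
    exact (hn₀ n hn).trans (add_le_add (ENNReal.div_le_div_right (hS n) c)
      (mul_le_mul_right (pow_le_pow_left₀ zero_le (hM n) 2) L))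
  · have hlim : Tendsto (fun n => Alin (fun x => u n x ^ 2) (fun y => v n y ^ 2) / c +
        L * eLpNorm (v n) 2 volume ^ 2) atTop (nhds 0) := by
      simpa using (ENNReal.Tendsto.div_const hA0 (Or.inr hc0)).add
        (ENNReal.Tendsto.const_mul (ENNReal.Tendsto.pow (n := 2) hv0) (Or.inr hL))
    have hstar : Tendsto (fun n => starLin (v n)) atTop (nhds 0) :=
      tendsto_of_tendsto_of_tendsto_of_le_of_le' tendsto_const_nhds hlim
        (Eventually.of_forall fun _ => zero_le) hbound
    simpa using hstar.ennrpow_const (1 / 2 : ℝ)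

/-- Cingolani–Weth type lemma. -/
theorem star_norm_control (u v : ℕ → ℝ → ℝ) (w : ℝ → ℝ)
    (hu : ∀ n, MemLp (u n) 2 volume) (hw : MemLp w 2 volume)
    (hw0 : ¬ (w =ᵐ[volume] (fun _ => 0)))
    (hptw : ∀ᵐ x : ℝ, Tendsto (fun n => u n x) atTop (nhds (w x)))
    (hv : ∀ n, MemLp (v n) 2 volume)
    (hvbdd : ∃ M : ℝ, ∀ n, eLpNorm (v n) 2 volume ≤ ENNReal.ofReal M)
    (hA : ∃ S : ℝ, ∀ n,
      Alin (fun x => (u n x) ^ 2) (fun x => (v n x) ^ 2) ≤ ENNReal.ofReal S) :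
    (∃ n₀ : ℕ, ∃ C : ℝ, 0 < C ∧ ∀ n, n₀ ≤ n →
      starLin (v n) ^ (1 / 2 : ℝ) < ENNReal.ofReal C) ∧
    ((Tendsto (fun n => Alin (fun x => (u n x) ^ 2) (fun x => (v n x) ^ 2))
        atTop (nhds 0)) →
      (Tendsto (fun n => eLpNorm (v n) 2 volume) atTop (nhds 0)) →
      Tendsto (fun n => starLin (v n) ^ (1 / 2 : ℝ)) atTop (nhds 0)) :=
  star_norm_control_general u v w hu hw0 hptw hv hvbdd hA
end
end

section
/- For all measurable functions u, v, w, z : ℝ → ℝ in L²(ℝ), the following inequality holds (as an inequality in [0,∞]): ∬_{ℝ×ℝ} ln(1+|x−y|) |u(x)v(x)| |w(y)z(y)| dx dy ≤ ‖u‖_* ‖v‖_* ‖w‖_{L²} ‖z‖_{L²} + ‖u‖_{L²} ‖v‖_{L²} ‖w‖_* ‖z‖_*, where ‖u‖_*² = ∫_ℝ ln(1+|x|) u(x)² dx. -/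
open MeasureTheory Real Filter

noncomputable section

/-! Since `1 + |x - y| ≤ (1 + |x|) (1 + |y|)`, the kernel `ln (1 + |x - y|)` is dominated by
`ln (1 + |x|) + ln (1 + |y|)`. Each of the two resulting terms is a product of one-variable
integrals, and each factor `∫ ln (1 + |x|) |u v|` or `∫ |w z|` is bounded by Cauchy–Schwarz in
`L²` of the measure `ln (1 + |x|) dx`, whose norm is `‖·‖_*`, or of Lebesgue measure. -/

open scoped ENNReal

theorem Real.log_one_add_abs_sub_le (x y : ℝ) :
    log (1 + |x - y|) ≤ log (1 + |x|) + log (1 + |y|) := by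
  rw [← log_mul (by positivity) (by positivity)]
  refine log_le_log (by positivity) ?_
  nlinarith [abs_sub x y, mul_nonneg (abs_nonneg x) (abs_nonneg y)]

theorem MeasureTheory.lintegral_enorm_mul_le_eLpNorm_two_mul {α 𝕜 : Type*} [MeasurableSpace α]
    [NormedRing 𝕜] {μ : Measure α} {f g : α → 𝕜}
    (hf : AEStronglyMeasurable f μ) (hg : AEStronglyMeasurable g μ) :
    ∫⁻ x, ‖f x * g x‖ₑ ∂μ ≤ eLpNorm f 2 μ * eLpNorm g 2 μ := by
  have holder : eLpNorm (f • g) 1 μ ≤ eLpNorm f 2 μ * eLpNorm g 2 μ :=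
    eLpNorm_smul_le_mul_eLpNorm hg hf
  rwa [eLpNorm_one_eq_lintegral_enorm] at holder

theorem MeasureTheory.lintegral_prod_mul_le_of_le_add {α β : Type*} [MeasurableSpace α]
    [MeasurableSpace β] {μ : Measure α} {ν : Measure β} [SFinite ν]
    {c : α × β → ℝ≥0∞} {a : α → ℝ≥0∞} {b : β → ℝ≥0∞} {f : α → ℝ≥0∞} {g : β → ℝ≥0∞}
    (hc : ∀ p, c p ≤ a p.1 + b p.2) (ha : AEMeasurable a μ) (hb : AEMeasurable b ν)
    (hf : AEMeasurable f μ) (hg : AEMeasurable g ν) :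
    ∫⁻ p, c p * (f p.1 * g p.2) ∂μ.prod ν
      ≤ (∫⁻ x, f x ∂μ.withDensity a) * ∫⁻ y, g y ∂ν
        + (∫⁻ x, f x ∂μ) * ∫⁻ y, g y ∂ν.withDensity b := by
  rw [lintegral_withDensity_eq_lintegral_mul₀ ha hf,
    lintegral_withDensity_eq_lintegral_mul₀ hb hg, ← lintegral_prod_mul (ha.mul hf) hg,
    ← lintegral_prod_mul hf (hb.mul hg)]
  calc _ ≤ ∫⁻ p, (a * f) p.1 * g p.2 + f p.1 * (b * g) p.2 ∂μ.prod ν :=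
        lintegral_mono fun p =>
          (mul_le_mul_left (hc p) _).trans_eq (by simp only [Pi.mul_apply]; ring)
    _ = _ := lintegral_add_left' ((ha.mul hf).comp_fst.mul hg.comp_snd) _

def logWeight (x : ℝ) : ℝ≥0∞ :=
  ENNReal.ofReal (log (1 + |x|))

theorem measurable_logWeight : Measurable logWeight :=
  (measurable_log.comp (measurable_const.add measurable_abs)).ennreal_ofReal

theorem logWeight_sub_le (x y : ℝ) : logWeight (x - y) ≤ logWeight x + logWeight y := by
  have hlog_nonneg (t : ℝ) : 0 ≤ log (1 + |t|) := log_nonneg (by simp)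
  rw [logWeight, logWeight, logWeight, ← ENNReal.ofReal_add (hlog_nonneg x) (hlog_nonneg y)]
  exact ENNReal.ofReal_le_ofReal (log_one_add_abs_sub_le x y)

theorem starLin_rpow_half (u : ℝ → ℝ) :
    starLin u ^ (1 / 2 : ℝ) = eLpNorm u 2 (volume.withDensity logWeight) := by
  rw [eLpNorm_eq_lintegral_rpow_enorm_toReal two_ne_zero ENNReal.ofNat_ne_top, ENNReal.toReal_ofNat,
    lintegral_withDensity_eq_lintegral_mul_non_measurable
    _ measurable_logWeight (ae_of_all _ fun _ => ENNReal.ofReal_lt_top)]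
  congr 1
  refine lintegral_congr fun x => ?_
  rw [Pi.mul_apply, logWeight, Real.enorm_eq_ofReal_abs, ENNReal.rpow_two,
    ← ENNReal.ofReal_pow (abs_nonneg _), sq_abs, ← ENNReal.ofReal_mul (log_nonneg (by simp))]

/-- the estimate
`A(uv, wz) ≤ ‖u‖_*‖v‖_*‖w‖₂‖z‖₂ + ‖u‖₂‖v‖₂‖w‖_*‖z‖_*`, as an inequality in `[0,∞]`. -/
theorem A_product_estimate (u v w z : ℝ → ℝ)
    (hu : MemLp u 2 volume) (hv : MemLp v 2 volume)
    (hw : MemLp w 2 volume) (hz : MemLp z 2 volume) :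
    (∫⁻ p : ℝ × ℝ, ENNReal.ofReal
        (Real.log (1 + |p.1 - p.2|) * |u p.1 * v p.1| * |w p.2 * z p.2|))
      ≤ starLin u ^ (1 / 2 : ℝ) * starLin v ^ (1 / 2 : ℝ)
          * eLpNorm w 2 volume * eLpNorm z 2 volume
        + eLpNorm u 2 volume * eLpNorm v 2 volume
          * starLin w ^ (1 / 2 : ℝ) * starLin z ^ (1 / 2 : ℝ) := by
  set μ := volume.withDensity logWeight
  have hμ : μ ≪ volume := withDensity_absolutelyContinuous _ _
  have hintegrand (p : ℝ × ℝ) :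
      ENNReal.ofReal (log (1 + |p.1 - p.2|) * |u p.1 * v p.1| * |w p.2 * z p.2|)
        = logWeight (p.1 - p.2) * (‖u p.1 * v p.1‖ₑ * ‖w p.2 * z p.2‖ₑ) := by
    rw [mul_assoc, ENNReal.ofReal_mul (log_nonneg (by simp)),
      ENNReal.ofReal_mul (abs_nonneg _), Real.enorm_eq_ofReal_abs, Real.enorm_eq_ofReal_abs,
      logWeight]
  simp only [hintegrand, Measure.volume_eq_prod, starLin_rpow_half]
  calc _ ≤ (∫⁻ x, ‖u x * v x‖ₑ ∂μ) * (∫⁻ y, ‖w y * z y‖ₑ)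
          + (∫⁻ x, ‖u x * v x‖ₑ) * ∫⁻ y, ‖w y * z y‖ₑ ∂μ :=
        lintegral_prod_mul_le_of_le_add (fun p => logWeight_sub_le p.1 p.2)
          measurable_logWeight.aemeasurable measurable_logWeight.aemeasurable
          (hu.1.mul hv.1).enorm (hw.1.mul hz.1).enorm
    _ ≤ eLpNorm u 2 μ * eLpNorm v 2 μ * (eLpNorm w 2 * eLpNorm z 2)
          + eLpNorm u 2 * eLpNorm v 2 * (eLpNorm w 2 μ * eLpNorm z 2 μ) := by
        gcongr
        · exact lintegral_enorm_mul_le_eLpNorm_two_mul (hu.1.mono_ac hμ) (hv.1.mono_ac hμ)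
        · exact lintegral_enorm_mul_le_eLpNorm_two_mul hw.1 hz.1
        · exact lintegral_enorm_mul_le_eLpNorm_two_mul hu.1 hv.1
        · exact lintegral_enorm_mul_le_eLpNorm_two_mul (hw.1.mono_ac hμ) (hz.1.mono_ac hμ)
    _ = _ := by ring
end
end

section
/- (Weak comparison principle) Let 0 < γ < 1 and μ > 0, and let u, v ∈ X with u, v > 0 almost everywhere. Suppose that for every φ ∈ X with φ ≥ 0 a.e.: ∬_{ℝ×ℝ} (v(x)−v(y))(φ(x)−φ(y))/|x−y|² dx dy − μ ∫_ℝ v^{−γ} φ dx ≥ ∬_{ℝ×ℝ} (u(x)−u(y))(φ(x)−φ(y))/|x−y|² dx dy − μ ∫_ℝ u^{−γ} φ dx. Then v ≥ u almost everywhere in ℝ. -/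
open MeasureTheory Real Filter

noncomputable section

/-!
Suppose `u ≤ v` fails on a set of positive measure, so that `φ = (u - v - δ)⁺` is nonzero for some
`δ > 0`. Testing the comparison inequality with `φ` itself is useless, as `v ^ (-γ) φ` need not be
integrable; instead split `φ = ψₙ + rₙ` with `ψₙ = min φ ((n + 1) v)`. Adding the inequalities for
`ψₙ` and `rₙ`, and using that `φ` is a nondecreasing function of `u - v` (so its Gagliardo pairing
with `u - v` is nonnegative), gives
`∫ (v ^ (-γ) - u ^ (-γ)) ψ₀ ≤ ∫ (v ^ (-γ) - u ^ (-γ)) ψₙ ≤ ∫ u ^ (-γ) rₙ`.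
The left side is positive since `t ↦ t ^ (-γ)` is strictly decreasing, while the right side tends
to `0` by dominated convergence (`u > δ` on the support of `φ`).
-/

open scoped Topology

section Integrability

variable {α : Type*} [MeasurableSpace α] {μ : Measure α}

theorem aemeasurable_of_sq_of_nonneg {f : α → ℝ} (hf : AEMeasurable (fun x => f x ^ 2) μ)
    (hf0 : ∀ᵐ x ∂μ, 0 ≤ f x) : AEMeasurable f μ :=
  (Real.continuous_sqrt.measurable.comp_aemeasurable hf).congr
    (hf0.mono fun _ hx => Real.sqrt_sq hx)

theorem sq_le_of_abs_le_add {g s t a b : ℝ} (h : |g| ≤ a * |s| + b * |t|) :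
    g ^ 2 ≤ 2 * a ^ 2 * s ^ 2 + 2 * b ^ 2 * t ^ 2 := by
  have h0 : 0 ≤ a * |s| + b * |t| := (abs_nonneg g).trans h
  nlinarith [sq_abs g, sq_abs s, sq_abs t, abs_nonneg g, sq_nonneg (a * |s| - b * |t|)]

theorem integrable_mul_sq_of_abs_le {ρ f h g : α → ℝ} {a b : ℝ} (hρ : ∀ᵐ x ∂μ, 0 ≤ ρ x)
    (hf : Integrable (fun x => ρ x * f x ^ 2) μ) (hh : Integrable (fun x => ρ x * h x ^ 2) μ)
    (hg : AEStronglyMeasurable (fun x => ρ x * g x ^ 2) μ)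
    (hgfh : ∀ᵐ x ∂μ, |g x| ≤ a * |f x| + b * |h x|) :
    Integrable (fun x => ρ x * g x ^ 2) μ := by
  refine ((hf.const_mul (2 * a ^ 2)).add (hh.const_mul (2 * b ^ 2))).mono' hg ?_
  filter_upwards [hρ, hgfh] with x hρx hx
  rw [Real.norm_of_nonneg (by positivity), Pi.add_apply]
  nlinarith [mul_le_mul_of_nonneg_left (sq_le_of_abs_le_add hx) hρx]

theorem integrable_max_sub_of_integrable_sq {w : α → ℝ} {δ : ℝ} (hδ : 0 < δ)
    (hw : AEMeasurable w μ) (hw2 : Integrable (fun x => w x ^ 2) μ) :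
    Integrable (fun x => max (w x - δ) 0) μ := by
  refine (hw2.div_const δ).mono' ((hw.sub_const δ).max aemeasurable_const).aestronglyMeasurable
    (ae_of_all _ fun x => ?_)
  rw [Real.norm_of_nonneg (le_max_right _ _), le_div_iff₀' hδ]
  refine (mul_max_of_nonneg _ _ hδ.le).trans_le (max_le ?_ (by rw [mul_zero]; positivity))
  nlinarith [sq_nonneg (w x - δ)]

theorem tendsto_integral_mul_sub_min {f φ v : α → ℝ} (hf : AEMeasurable f μ)
    (hφ : AEMeasurable φ μ) (hv : AEMeasurable v μ) (hfφ : Integrable (fun x => f x * φ x) μ)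
    (hφ0 : ∀ᵐ x ∂μ, 0 ≤ φ x) (hv0 : ∀ᵐ x ∂μ, 0 < v x) :
    Tendsto (fun n : ℕ => ∫ x, f x * (φ x - min (φ x) ((n + 1) * v x)) ∂μ) atTop (𝓝 0) := by
  have hlim := tendsto_integral_of_dominated_convergence (fun x => ‖f x * φ x‖) (f := fun _ => 0)
    (F := fun (n : ℕ) x => f x * (φ x - min (φ x) ((n + 1) * v x)))
    (fun n => (hf.mul (hφ.sub (hφ.min (hv.const_mul _)))).aestronglyMeasurable) hfφ.norm
    (fun n => by
      filter_upwards [hφ0, hv0] with x hφx hvx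
      rw [norm_mul, norm_mul]
      refine mul_le_mul_of_nonneg_left ?_ (norm_nonneg _)
      have : 0 ≤ min (φ x) ((n + 1) * v x) := le_min hφx (by positivity)
      rw [Real.norm_of_nonneg (sub_nonneg.2 (min_le_left _ _)), Real.norm_of_nonneg hφx]
      linarith)
    (by
      filter_upwards [hv0] with x hvx
      obtain ⟨N, hN⟩ := exists_nat_ge (φ x / v x)
      refine tendsto_atTop_of_eventually_const (i₀ := N) fun n hn => ?_
      have : φ x ≤ (n + 1) * v x := by
        rw [div_le_iff₀ hvx] at hN
        nlinarith [(Nat.cast_le (α := ℝ)).2 hn]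
      simp [min_eq_left this])
  simpa using hlim

theorem integrable_rpow_neg_mul_of_le {f g φ : α → ℝ} {γ δ : ℝ} (hγ : 0 ≤ γ) (hδ : 0 < δ)
    (hf : AEMeasurable f μ) (hg : AEMeasurable g μ) (hφ : Integrable φ μ)
    (hg0 : ∀ᵐ x ∂μ, 0 ≤ g x) (hgφ : ∀ᵐ x ∂μ, g x ≤ φ x) (hfφ : ∀ᵐ x ∂μ, φ x ≠ 0 → δ ≤ f x) :
    Integrable (fun x => f x ^ (-γ) * g x) μ := by
  refine (hφ.const_mul (δ ^ (-γ))).mono' ((hf.pow_const _).mul hg).aestronglyMeasurable ?_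
  filter_upwards [hg0, hgφ, hfφ] with x hg0x hgφx hfx
  rcases eq_or_lt_of_le hg0x with hgx | hgx
  · rw [← hgx, mul_zero, norm_zero]
    exact mul_nonneg (Real.rpow_nonneg hδ.le _) (hg0x.trans hgφx)
  · have hδf := hfx (hgx.trans_le hgφx).ne'
    have hrpow : f x ^ (-γ) ≤ δ ^ (-γ) := Real.rpow_le_rpow_of_nonpos hδ hδf (by linarith)
    rw [Real.norm_of_nonneg (mul_nonneg (Real.rpow_nonneg (hδ.le.trans hδf) _) hg0x)]
    exact mul_le_mul hrpow hgφx hg0x (Real.rpow_nonneg hδ.le _)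

theorem rpow_neg_mul_min_le_max {t a c γ : ℝ} (ht : 0 < t) (hγ0 : 0 ≤ γ) (hγ1 : γ ≤ 1)
    (ha : 0 ≤ a) (hc : 0 ≤ c) : t ^ (-γ) * min a (c * t) ≤ max a c := by
  rcases le_or_gt 1 t with ht1 | ht1
  · have : t ^ (-γ) ≤ 1 := Real.rpow_le_one_of_one_le_of_nonpos ht1 (by linarith)
    calc t ^ (-γ) * min a (c * t) ≤ 1 * min a (c * t) :=
          mul_le_mul_of_nonneg_right this (le_min ha (by positivity))
      _ ≤ max a c := by rw [one_mul]; exact (min_le_left _ _).trans (le_max_left _ _)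
  · have : t ^ (1 - γ) ≤ 1 := Real.rpow_le_one ht.le ht1.le (by linarith)
    calc t ^ (-γ) * min a (c * t) ≤ t ^ (-γ) * (c * t) :=
          mul_le_mul_of_nonneg_left (min_le_right _ _) (Real.rpow_nonneg ht.le _)
      _ = c * t ^ (1 - γ) := by
          rw [sub_eq_neg_add, Real.rpow_add ht, Real.rpow_one]; ring
      _ ≤ max a c := (mul_le_of_le_one_right hc this).trans (le_max_right _ _)

theorem integrable_rpow_neg_mul_min {v φ h : α → ℝ} {γ c : ℝ} (hγ0 : 0 ≤ γ) (hγ1 : γ ≤ 1)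
    (hc : 0 ≤ c) (hv : AEMeasurable v μ) (hφm : AEMeasurable φ μ) (hφ : Integrable φ μ)
    (hh : Integrable h μ) (hv0 : ∀ᵐ x ∂μ, 0 < v x) (hφ0 : ∀ᵐ x ∂μ, 0 ≤ φ x)
    (hφh : ∀ᵐ x ∂μ, φ x ≠ 0 → 1 ≤ h x) :
    Integrable (fun x => v x ^ (-γ) * min (φ x) (c * v x)) μ := by
  refine (hφ.add (hh.norm.const_mul c)).mono'
    ((hv.pow_const _).mul (hφm.min (hv.const_mul c))).aestronglyMeasurable ?_
  filter_upwards [hv0, hφ0, hφh] with x hvx hφx hhx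
  have hmin : 0 ≤ min (φ x) (c * v x) := le_min hφx (by positivity)
  rw [Real.norm_of_nonneg (mul_nonneg (Real.rpow_nonneg hvx.le _) hmin), Pi.add_apply]
  rcases eq_or_lt_of_le hφx with hφx0 | hφx0
  · rw [← hφx0, min_eq_left (by positivity), mul_zero]
    positivity
  · have h1 : 1 ≤ ‖h x‖ := (hhx hφx0.ne').trans (le_abs_self _)
    refine (rpow_neg_mul_min_le_max hvx hγ0 hγ1 hφx hc).trans (max_le ?_ ?_) <;> nlinarith

theorem exists_pos_measure_add_lt_ne_zero {f g : α → ℝ} (h : ¬ ∀ᵐ x ∂μ, f x ≤ g x) :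
    ∃ δ > 0, μ {x | g x + δ < f x} ≠ 0 := by
  by_contra! hδ
  refine h ?_
  have hn : ∀ᵐ x ∂μ, ∀ n : ℕ, f x ≤ g x + 1 / (n + 1) := ae_all_iff.2 fun n => by
    simpa [ae_iff, not_le] using hδ (1 / (n + 1)) (by positivity)
  filter_upwards [hn] with x hx
  refine le_of_forall_pos_le_add fun ε hε => ?_
  obtain ⟨n, hn⟩ := exists_nat_one_div_lt hε
  linarith [hx n]

end Integrability

section Gagliardo

def gagliardoDensity (u : ℝ → ℝ) (p : ℝ × ℝ) : ℝ :=
  (u p.1 - u p.2) ^ 2 / |p.1 - p.2| ^ 2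

def gagliardoIntegrand (u φ : ℝ → ℝ) (p : ℝ × ℝ) : ℝ :=
  (u p.1 - u p.2) * (φ p.1 - φ p.2) / |p.1 - p.2| ^ 2

theorem bilinGagliardo_eq_integral (u φ : ℝ → ℝ) :
    bilinGagliardo u φ = ∫ p, gagliardoIntegrand u φ p :=
  rfl

theorem gagliardoDensity_eq_inv_mul (u : ℝ → ℝ) :
    gagliardoDensity u = fun p => (|p.1 - p.2| ^ 2)⁻¹ * (u p.1 - u p.2) ^ 2 :=
  funext fun _ => div_eq_inv_mul _ _

theorem integrable_gagliardoDensity_of_abs_sub_le {u v g : ℝ → ℝ} {a b : ℝ}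
    (hg : AEMeasurable g) (hu : Integrable (gagliardoDensity u))
    (hv : Integrable (gagliardoDensity v))
    (hgx : ∀ x y, |g x - g y| ≤ a * |u x - u y| + b * |v x - v y|) :
    Integrable (gagliardoDensity g) := by
  rw [gagliardoDensity_eq_inv_mul] at hu hv ⊢
  refine integrable_mul_sq_of_abs_le (ae_of_all _ fun _ => by positivity) hu hv ?_
    (ae_of_all _ fun p => hgx p.1 p.2)
  exact ((continuous_fst.sub continuous_snd).abs.pow 2).measurable.inv.aemeasurable.mul
    ((hg.comp_fst.sub hg.comp_snd).pow_const 2) |>.aestronglyMeasurable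

theorem integrable_gagliardoIntegrand {u φ : ℝ → ℝ} (hu : AEMeasurable u) (hφ : AEMeasurable φ)
    (hu2 : Integrable (gagliardoDensity u)) (hφ2 : Integrable (gagliardoDensity φ)) :
    Integrable (gagliardoIntegrand u φ) := by
  refine (hu2.add hφ2).mono' ?_ (ae_of_all _ fun p => ?_)
  · exact (((hu.comp_fst.sub hu.comp_snd).mul (hφ.comp_fst.sub hφ.comp_snd)).div
      ((continuous_fst.sub continuous_snd).abs.pow 2).measurable.aemeasurable).aestronglyMeasurable
  · have hprod (a b : ℝ) : |a * b| ≤ a ^ 2 + b ^ 2 := by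
      rw [abs_mul, ← sq_abs a, ← sq_abs b]
      nlinarith [two_mul_le_add_sq |a| |b|, abs_nonneg a, abs_nonneg b]
    rw [Pi.add_apply, gagliardoIntegrand, gagliardoDensity, gagliardoDensity, ← add_div,
      Real.norm_eq_abs, abs_div, abs_of_nonneg (sq_nonneg |p.1 - p.2|)]
    exact div_le_div_of_nonneg_right (hprod _ _) (sq_nonneg _)

theorem bilinGagliardo_sub_add_eq {u v ψ r : ℝ → ℝ} (huψ : Integrable (gagliardoIntegrand u ψ))
    (hur : Integrable (gagliardoIntegrand u r)) (hvψ : Integrable (gagliardoIntegrand v ψ))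
    (hvr : Integrable (gagliardoIntegrand v r)) :
    bilinGagliardo (u - v) (ψ + r) =
      bilinGagliardo u ψ + bilinGagliardo u r - (bilinGagliardo v ψ + bilinGagliardo v r) := by
  have hpt : gagliardoIntegrand (u - v) (ψ + r) = gagliardoIntegrand u ψ + gagliardoIntegrand u r
      - (gagliardoIntegrand v ψ + gagliardoIntegrand v r) := by
    ext p
    simp only [gagliardoIntegrand, Pi.add_apply, Pi.sub_apply]
    ring
  simp only [bilinGagliardo_eq_integral]
  rw [hpt, integral_sub' (huψ.add hur) (hvψ.add hvr), integral_add' huψ hur, integral_add' hvψ hvr]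

theorem bilinGagliardo_comp_nonneg {g : ℝ → ℝ} (hg : Monotone g) (w : ℝ → ℝ) :
    0 ≤ bilinGagliardo w (fun x => g (w x)) := by
  refine integral_nonneg fun p => div_nonneg ?_ (sq_nonneg _)
  rcases le_total (w p.1) (w p.2) with h | h
  · exact mul_nonneg_of_nonpos_of_nonpos (sub_nonpos.2 h) (sub_nonpos.2 (hg h))
  · exact mul_nonneg (sub_nonneg.2 h) (sub_nonneg.2 (hg h))

theorem memX_of_abs_le {u v g : ℝ → ℝ} {a b : ℝ} (hu : memX u) (hv : memX v)
    (hg : AEMeasurable g) (hgx : ∀ᵐ x, |g x| ≤ a * |u x| + b * |v x|)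
    (hgxy : ∀ x y, |g x - g y| ≤ a * |u x - u y| + b * |v x - v y|) : memX g := by
  refine ⟨⟨?_, integrable_gagliardoDensity_of_abs_sub_le hg hu.1.2 hv.1.2 hgxy⟩, ?_⟩
  · simpa using integrable_mul_sq_of_abs_le (ρ := fun _ => (1 : ℝ))
      (ae_of_all _ fun _ => zero_le_one) (by simpa using hu.1.1) (by simpa using hv.1.1)
      (by simpa using (hg.pow_const 2).aestronglyMeasurable) hgx
  · exact integrable_mul_sq_of_abs_le
      (ae_of_all _ fun x => Real.log_nonneg (le_add_of_nonneg_right (abs_nonneg x))) hu.2 hv.2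
      ((Real.measurable_log.comp (measurable_const.add measurable_abs)).aemeasurable.mul
        (hg.pow_const 2)).aestronglyMeasurable hgx

theorem memX_sub {u v : ℝ → ℝ} (hu : memX u) (hv : memX v) (hum : AEMeasurable u)
    (hvm : AEMeasurable v) : memX (u - v) :=
  memX_of_abs_le (a := 1) (b := 1) hu hv (hum.sub hvm)
    (ae_of_all _ fun x => by simpa using abs_sub (u x) (v x))
    fun x y => by
      rw [one_mul, one_mul, Pi.sub_apply, Pi.sub_apply, sub_sub_sub_comm]
      exact abs_sub _ _

end Gagliardo

section Cutoff

def cutoff (w : ℝ → ℝ) (δ : ℝ) (x : ℝ) : ℝ :=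
  max (w x - δ) 0

def truncCutoff (w v : ℝ → ℝ) (δ : ℝ) (n : ℕ) (x : ℝ) : ℝ :=
  min (cutoff w δ x) ((n + 1) * v x)

variable {w v : ℝ → ℝ} {δ : ℝ}

theorem cutoff_nonneg (x : ℝ) : 0 ≤ cutoff w δ x :=
  le_max_right _ _

theorem lt_of_cutoff_ne_zero {x : ℝ} (h : cutoff w δ x ≠ 0) : δ < w x := by
  by_contra! hle
  exact h (max_eq_right (by linarith))

theorem cutoff_le_abs (hδ : 0 ≤ δ) (x : ℝ) : cutoff w δ x ≤ |w x| :=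
  max_le (by linarith [le_abs_self (w x)]) (abs_nonneg _)

theorem abs_cutoff_sub_cutoff_le (x y : ℝ) : |cutoff w δ x - cutoff w δ y| ≤ |w x - w y| := by
  simpa [cutoff] using abs_max_sub_max_le_max (w x - δ) 0 (w y - δ) 0

theorem aemeasurable_cutoff (hw : AEMeasurable w) : AEMeasurable (cutoff w δ) :=
  (hw.sub_const δ).max aemeasurable_const

theorem truncCutoff_le_cutoff (n : ℕ) (x : ℝ) : truncCutoff w v δ n x ≤ cutoff w δ x :=
  min_le_left _ _

theorem truncCutoff_nonneg {x : ℝ} (hv : 0 ≤ v x) (n : ℕ) : 0 ≤ truncCutoff w v δ n x :=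
  le_min (cutoff_nonneg x) (by positivity)

theorem truncCutoff_eq_zero {x : ℝ} (hv : 0 ≤ v x) (h : cutoff w δ x = 0) (n : ℕ) :
    truncCutoff w v δ n x = 0 :=
  le_antisymm (h ▸ truncCutoff_le_cutoff n x) (truncCutoff_nonneg hv n)

theorem abs_truncCutoff_sub_le (n : ℕ) (x y : ℝ) :
    |truncCutoff w v δ n x - truncCutoff w v δ n y| ≤ |w x - w y| + (n + 1) * |v x - v y| := by
  have hn : (0 : ℝ) ≤ n + 1 := by positivity
  refine (abs_min_sub_min_le_max _ _ _ _).trans (max_le ?_ ?_)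
  · nlinarith [abs_cutoff_sub_cutoff_le (w := w) (δ := δ) x y, abs_nonneg (v x - v y)]
  · rw [← mul_sub, abs_mul, abs_of_nonneg hn]
    linarith [abs_nonneg (w x - w y)]

theorem aemeasurable_truncCutoff (hw : AEMeasurable w) (hv : AEMeasurable v) (n : ℕ) :
    AEMeasurable (truncCutoff w v δ n) :=
  (aemeasurable_cutoff hw).min (hv.const_mul _)

theorem memX_truncCutoff (hw : memX w) (hv : memX v) (hwm : AEMeasurable w)
    (hvm : AEMeasurable v) (hδ : 0 ≤ δ) (hv0 : ∀ᵐ x, 0 < v x) (n : ℕ) :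
    memX (truncCutoff w v δ n) := by
  refine memX_of_abs_le (a := 1) hw hv (aemeasurable_truncCutoff hwm hvm n) ?_
    fun x y => by rw [one_mul]; exact abs_truncCutoff_sub_le n x y
  filter_upwards [hv0] with x hx
  rw [abs_of_nonneg (truncCutoff_nonneg hx.le n)]
  nlinarith [truncCutoff_le_cutoff (w := w) (v := v) (δ := δ) n x, cutoff_le_abs (w := w) hδ x,
    abs_nonneg (v x)]

theorem memX_cutoff_sub_truncCutoff (hw : memX w) (hv : memX v) (hwm : AEMeasurable w)
    (hvm : AEMeasurable v) (hδ : 0 ≤ δ) (hv0 : ∀ᵐ x, 0 < v x) (n : ℕ) :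
    memX (cutoff w δ - truncCutoff w v δ n) := by
  refine memX_of_abs_le (a := 2) (b := n + 1) hw hv
    ((aemeasurable_cutoff hwm).sub (aemeasurable_truncCutoff hwm hvm n)) ?_ fun x y => ?_
  · filter_upwards [hv0] with x hx
    rw [Pi.sub_apply, abs_of_nonneg (sub_nonneg.2 (truncCutoff_le_cutoff n x))]
    nlinarith [truncCutoff_nonneg (w := w) (δ := δ) hx.le n, cutoff_le_abs (w := w) hδ x,
      abs_nonneg (v x), abs_nonneg (w x)]
  · have h := abs_sub (cutoff w δ x - cutoff w δ y) (truncCutoff w v δ n x - truncCutoff w v δ n y)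
    rw [sub_sub_sub_comm] at h
    rw [Pi.sub_apply, Pi.sub_apply]
    linarith [abs_cutoff_sub_cutoff_le (w := w) (δ := δ) x y,
      abs_truncCutoff_sub_le (w := w) (v := v) (δ := δ) n x y]

end Cutoff

section Comparison

variable {γ μ δ : ℝ} {u v : ℝ → ℝ}

theorem integral_rpow_sub_mul_le_of_comparison {ψ r : ℝ → ℝ} (hμ : 0 < μ)
    (hcomp : ∀ φ : ℝ → ℝ, memX φ → (∀ᵐ x : ℝ, 0 ≤ φ x) →
      bilinGagliardo u φ - μ * ∫ x : ℝ, (u x) ^ (-γ) * φ x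
        ≤ bilinGagliardo v φ - μ * ∫ x : ℝ, (v x) ^ (-γ) * φ x)
    (hu : memX u) (hv : memX v) (hum : AEMeasurable u) (hvm : AEMeasurable v)
    (hvpos : ∀ᵐ x, 0 < v x) (hψ : memX ψ) (hr : memX r) (hψm : AEMeasurable ψ)
    (hrm : AEMeasurable r) (hψ0 : ∀ᵐ x, 0 ≤ ψ x) (hr0 : ∀ᵐ x, 0 ≤ r x)
    (hIu : Integrable fun x => u x ^ (-γ) * ψ x) (hIv : Integrable fun x => v x ^ (-γ) * ψ x)
    (hB : 0 ≤ bilinGagliardo (u - v) (ψ + r)) :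
    ∫ x, (v x ^ (-γ) - u x ^ (-γ)) * ψ x ≤ ∫ x, u x ^ (-γ) * r x := by
  have hsplit := bilinGagliardo_sub_add_eq
    (integrable_gagliardoIntegrand hum hψm hu.1.2 hψ.1.2)
    (integrable_gagliardoIntegrand hum hrm hu.1.2 hr.1.2)
    (integrable_gagliardoIntegrand hvm hψm hv.1.2 hψ.1.2)
    (integrable_gagliardoIntegrand hvm hrm hv.1.2 hr.1.2)
  have hvr : 0 ≤ ∫ x, v x ^ (-γ) * r x := integral_nonneg_of_ae <| by
    filter_upwards [hvpos, hr0] with x hvx hrx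
    exact mul_nonneg (Real.rpow_nonneg hvx.le _) hrx
  have hdiff : ∫ x, (v x ^ (-γ) - u x ^ (-γ)) * ψ x
      = (∫ x, v x ^ (-γ) * ψ x) - ∫ x, u x ^ (-γ) * ψ x := by
    rw [← integral_sub hIv hIu]
    simp_rw [sub_mul]
  refine le_of_mul_le_mul_left ?_ hμ
  rw [hdiff]
  linarith [hcomp ψ hψ hψ0, hcomp r hr hr0, mul_nonneg hμ.le hvr, hsplit, hB]

theorem rpow_neg_le_rpow_neg_of_cutoff_ne_zero (hγ : 0 ≤ γ) (hδ : 0 ≤ δ) {x : ℝ} (hv : 0 < v x)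
    (h : cutoff (u - v) δ x ≠ 0) : u x ^ (-γ) ≤ v x ^ (-γ) := by
  have := lt_of_cutoff_ne_zero h
  rw [Pi.sub_apply] at this
  exact Real.rpow_le_rpow_of_nonpos hv (by linarith) (by linarith)

theorem monotone_integral_rpow_sub_mul_truncCutoff (hγ : 0 ≤ γ) (hδ : 0 ≤ δ)
    (hvpos : ∀ᵐ x, 0 < v x)
    (hint : ∀ n, Integrable fun x => (v x ^ (-γ) - u x ^ (-γ)) * truncCutoff (u - v) v δ n x) :
    Monotone fun n : ℕ => ∫ x, (v x ^ (-γ) - u x ^ (-γ)) * truncCutoff (u - v) v δ n x := by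
  intro m n hmn
  refine integral_mono_ae (hint m) (hint n) ?_
  filter_upwards [hvpos] with x hvx
  by_cases h : cutoff (u - v) δ x = 0
  · rw [truncCutoff_eq_zero hvx.le h, truncCutoff_eq_zero hvx.le h]
  · refine mul_le_mul_of_nonneg_left (min_le_min le_rfl ?_)
      (sub_nonneg.2 (rpow_neg_le_rpow_neg_of_cutoff_ne_zero hγ hδ hvx h))
    exact mul_le_mul_of_nonneg_right (by exact_mod_cast Nat.add_le_add_right hmn 1) hvx.le

theorem integral_rpow_sub_mul_truncCutoff_pos (hγ : 0 < γ) (hδ : 0 < δ) (hvpos : ∀ᵐ x, 0 < v x)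
    (hint : Integrable fun x => (v x ^ (-γ) - u x ^ (-γ)) * truncCutoff (u - v) v δ 0 x)
    (hS : volume {x | v x + δ < u x} ≠ 0) :
    0 < ∫ x, (v x ^ (-γ) - u x ^ (-γ)) * truncCutoff (u - v) v δ 0 x := by
  have hnonneg : 0 ≤ᵐ[volume] fun x => (v x ^ (-γ) - u x ^ (-γ)) * truncCutoff (u - v) v δ 0 x := by
    filter_upwards [hvpos] with x hvx
    by_cases h : cutoff (u - v) δ x = 0
    · rw [Pi.zero_apply, truncCutoff_eq_zero hvx.le h, mul_zero]
    · exact mul_nonneg (sub_nonneg.2 (rpow_neg_le_rpow_neg_of_cutoff_ne_zero hγ.le hδ.le hvx h))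
        (truncCutoff_nonneg hvx.le 0)
  refine (integral_pos_iff_support_of_nonneg_ae hnonneg hint).2
    ((pos_iff_ne_zero.2 hS).trans_le (measure_mono_ae ?_))
  filter_upwards [hvpos] with x hvx hx
  have hvu : v x + δ < u x := hx
  refine mul_ne_zero (sub_pos.2 (Real.rpow_lt_rpow_of_neg hvx (by linarith) (by linarith))).ne'
    (lt_min (lt_max_of_lt_left ?_) (by positivity)).ne'
  rw [Pi.sub_apply]
  linarith

theorem integrable_rpow_neg_mul_truncCutoff (hγ0 : 0 ≤ γ) (hγ1 : γ ≤ 1) (hδ : 0 < δ)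
    (hvm : AEMeasurable v) (hwm : AEMeasurable (u - v)) (hw2 : Integrable fun x => (u - v) x ^ 2)
    (hvpos : ∀ᵐ x, 0 < v x) (n : ℕ) :
    Integrable fun x => v x ^ (-γ) * truncCutoff (u - v) v δ n x := by
  refine integrable_rpow_neg_mul_min hγ0 hγ1 (by positivity) hvm (aemeasurable_cutoff hwm)
    (integrable_max_sub_of_integrable_sq hδ hwm hw2) (hw2.div_const (δ ^ 2)) hvpos
    (ae_of_all _ cutoff_nonneg) (ae_of_all _ fun x h => ?_)
  rw [le_div_iff₀ (by positivity), one_mul]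
  nlinarith [lt_of_cutoff_ne_zero h]

theorem integral_rpow_sub_mul_truncCutoff_le (hμ : 0 < μ)
    (hcomp : ∀ φ : ℝ → ℝ, memX φ → (∀ᵐ x : ℝ, 0 ≤ φ x) →
      bilinGagliardo u φ - μ * ∫ x : ℝ, (u x) ^ (-γ) * φ x
        ≤ bilinGagliardo v φ - μ * ∫ x : ℝ, (v x) ^ (-γ) * φ x)
    (hu : memX u) (hv : memX v) (hum : AEMeasurable u) (hvm : AEMeasurable v)
    (hvpos : ∀ᵐ x, 0 < v x) (hδ : 0 ≤ δ) (n : ℕ)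
    (hIu : Integrable fun x => u x ^ (-γ) * truncCutoff (u - v) v δ n x)
    (hIv : Integrable fun x => v x ^ (-γ) * truncCutoff (u - v) v δ n x) :
    ∫ x, (v x ^ (-γ) - u x ^ (-γ)) * truncCutoff (u - v) v δ n x
      ≤ ∫ x, u x ^ (-γ) * (cutoff (u - v) δ x - truncCutoff (u - v) v δ n x) := by
  have hwm := hum.sub hvm
  have hw := memX_sub hu hv hum hvm
  refine integral_rpow_sub_mul_le_of_comparison (r := cutoff (u - v) δ - truncCutoff (u - v) v δ n)
    hμ hcomp hu hv hum hvm hvpos (memX_truncCutoff hw hv hwm hvm hδ hvpos n)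
    (memX_cutoff_sub_truncCutoff hw hv hwm hvm hδ hvpos n) (aemeasurable_truncCutoff hwm hvm n)
    ((aemeasurable_cutoff hwm).sub (aemeasurable_truncCutoff hwm hvm n))
    (hvpos.mono fun x hx => truncCutoff_nonneg hx.le n)
    (ae_of_all _ fun x => sub_nonneg.2 (truncCutoff_le_cutoff n x)) hIu hIv ?_
  rw [add_sub_cancel]
  exact bilinGagliardo_comp_nonneg (g := fun t => max (t - δ) 0)
    (fun a b h => max_le_max (by linarith) le_rfl) (u - v)

end Comparison

/-- weak comparison principle for `(−Δ)^{1/2} − μ(·)^{−γ}`. -/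
theorem weak_comparison (γ μ : ℝ) (hγ0 : 0 < γ) (hγ1 : γ < 1) (hμ : 0 < μ)
    (u v : ℝ → ℝ) (hu : memX u) (hv : memX v)
    (hupos : ∀ᵐ x : ℝ, 0 < u x) (hvpos : ∀ᵐ x : ℝ, 0 < v x)
    (hcomp : ∀ φ : ℝ → ℝ, memX φ → (∀ᵐ x : ℝ, 0 ≤ φ x) →
      bilinGagliardo u φ - μ * ∫ x : ℝ, (u x) ^ (-γ) * φ x
        ≤ bilinGagliardo v φ - μ * ∫ x : ℝ, (v x) ^ (-γ) * φ x) :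
    ∀ᵐ x : ℝ, u x ≤ v x := by
  have hum := aemeasurable_of_sq_of_nonneg hu.1.1.aemeasurable (hupos.mono fun _ => le_of_lt)
  have hvm := aemeasurable_of_sq_of_nonneg hv.1.1.aemeasurable (hvpos.mono fun _ => le_of_lt)
  have hwm := hum.sub hvm
  have hw2 := (memX_sub hu hv hum hvm).1.1
  by_contra hcon
  obtain ⟨δ, hδ, hS⟩ := exists_pos_measure_add_lt_ne_zero hcon
  have hφ := integrable_max_sub_of_integrable_sq hδ hwm hw2
  have hsupp : ∀ᵐ x, cutoff (u - v) δ x ≠ 0 → δ ≤ u x := hvpos.mono fun x hvx h => by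
    linarith [lt_of_cutoff_ne_zero h, Pi.sub_apply u v x]
  have hIu (n : ℕ) : Integrable fun x => u x ^ (-γ) * truncCutoff (u - v) v δ n x :=
    integrable_rpow_neg_mul_of_le hγ0.le hδ hum (aemeasurable_truncCutoff hwm hvm n) hφ
      (hvpos.mono fun x hx => truncCutoff_nonneg hx.le n) (ae_of_all _ (truncCutoff_le_cutoff n))
      hsupp
  have hIv := integrable_rpow_neg_mul_truncCutoff hγ0.le hγ1.le hδ hvm hwm hw2 hvpos
  have hI (n : ℕ) := ((hIv n).sub (hIu n)).congr (ae_of_all _ fun x => (sub_mul _ _ _).symm)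
  have hlim := tendsto_integral_mul_sub_min (hum.pow_const (-γ)) (aemeasurable_cutoff hwm) hvm
    (integrable_rpow_neg_mul_of_le hγ0.le hδ hum (aemeasurable_cutoff hwm) hφ
      (ae_of_all _ cutoff_nonneg) (ae_of_all _ fun _ => le_rfl) hsupp)
    (ae_of_all _ cutoff_nonneg) hvpos
  refine (integral_rpow_sub_mul_truncCutoff_pos hγ0 hδ hvpos (hI 0) hS).not_ge
    (ge_of_tendsto' hlim fun n => ?_)
  exact (monotone_integral_rpow_sub_mul_truncCutoff hγ0.le hδ.le hvpos hI (Nat.zero_le n)).trans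
    (integral_rpow_sub_mul_truncCutoff_le hμ hcomp hu hv hum hvm hvpos hδ.le n (hIu n) (hIv n))
end
end
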